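/- arXiv:2001.04313 — 6 statements merged into one kernel-verified Lean document; each statement's English description precedes it below -/
import Mathlib

section
/- With the hypotheses of the generalized hyperbolic splitting (constants c ≥ 1, 0 < t < 1, with ‖Tᵏy‖ ≤ c tᵏ‖y‖ on M and ‖T^{-k}z‖ ≤ c tᵏ‖z‖ on N), the map φ defined by φ(x) = Σ_{k=0}^∞ Tᵏ P_M(α(R^{-k-1}x)) − Σ_{k=1}^∞ T^{-k} P_N(α(R^{k-1}x)) satisfies the sup-norm bound ‖φ‖_∞ ≤ (c·d·(1+t)/(1−t))·‖α‖_∞, where d = max(‖P_M‖, ‖P_N‖). -/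
/-- With the generalized hyperbolic splitting estimates, the map
`φ(x) = Σ_{k≥0} Tᵏ P_M (α (R^{-k-1} x)) − Σ_{k≥1} T^{-k} P_N (α (R^{k-1} x))`
satisfies `‖φ‖_∞ ≤ (c d (1+t)/(1−t)) ‖α‖_∞` where `d = max(‖P_M‖, ‖P_N‖)`. -/
theorem sup_norm_bound_of_series
    {X : Type*} [NormedAddCommGroup X] [NormedSpace ℝ X] [CompleteSpace X]
    (T : X ≃L[ℝ] X) (M N : Submodule ℝ X)
    (hMclosed : IsClosed (M : Set X)) (hNclosed : IsClosed (N : Set X))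
    (hcompl : IsCompl M N)
    (hTM : ∀ x ∈ M, T x ∈ M) (hTN : ∀ x ∈ N, T.symm x ∈ N)
    (c t : ℝ) (hc : 1 ≤ c) (ht0 : 0 < t) (ht1 : t < 1)
    (hM : ∀ (n : ℕ), ∀ y ∈ M, ‖(T ^ n) y‖ ≤ c * t ^ n * ‖y‖)
    (hN : ∀ (n : ℕ), ∀ z ∈ N, ‖(T.symm ^ n) z‖ ≤ c * t ^ n * ‖z‖)
    (PM PN : X →L[ℝ] X)
    (hPM : ∀ x, PM x ∈ M) (hPN : ∀ x, PN x ∈ N)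
    (hP : ∀ x, PM x + PN x = x)
    (α : X → X) (hα : UniformContinuous α) (A : ℝ) (hA : 0 ≤ A)
    (hαbd : ∀ x, ‖α x‖ ≤ A)
    (R : X ≃ X) (hR : UniformContinuous ⇑R) (hR' : UniformContinuous ⇑R.symm)
    (φ : X → X)
    (hφ : ∀ x, φ x = (∑' k : ℕ, (T ^ k) (PM (α ((⇑R.symm)^[k + 1] x))))
                    - ∑' k : ℕ, (T.symm ^ (k + 1)) (PN (α ((⇑R)^[k] x)))) :
    ∀ x, ‖φ x‖ ≤ c * max ‖PM‖ ‖PN‖ * (1 + t) / (1 - t) * A := by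
  intro x
  set d := max ‖PM‖ ‖PN‖ with hd
  have hc0 : (0:ℝ) ≤ c := le_trans zero_le_one hc
  have hd0 : (0:ℝ) ≤ d := le_trans (norm_nonneg PM) (le_max_left _ _)
  have hPMbd : ∀ y : X, ‖PM (α y)‖ ≤ d * A := fun y =>
    le_trans (PM.le_opNorm _)
      (mul_le_mul (le_max_left _ _) (hαbd _) (norm_nonneg _) hd0)
  have hPNbd : ∀ y : X, ‖PN (α y)‖ ≤ d * A := fun y =>
    le_trans (PN.le_opNorm _)
      (mul_le_mul (le_max_right _ _) (hαbd _) (norm_nonneg _) hd0)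
  have hb1 : ∀ k : ℕ, ‖(T ^ k) (PM (α ((⇑R.symm)^[k + 1] x)))‖ ≤ c * d * A * t ^ k := by
    intro k
    calc ‖(T ^ k) (PM (α ((⇑R.symm)^[k + 1] x)))‖
        ≤ c * t ^ k * ‖PM (α ((⇑R.symm)^[k + 1] x))‖ := hM k _ (hPM _)
      _ ≤ c * t ^ k * (d * A) := by
          exact mul_le_mul_of_nonneg_left (hPMbd _)
            (mul_nonneg hc0 (pow_nonneg ht0.le _))
      _ = c * d * A * t ^ k := by ring
  have hb2 : ∀ k : ℕ, ‖(T.symm ^ (k + 1)) (PN (α ((⇑R)^[k] x)))‖ ≤ c * d * A * t * t ^ k := by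
    intro k
    calc ‖(T.symm ^ (k + 1)) (PN (α ((⇑R)^[k] x)))‖
        ≤ c * t ^ (k + 1) * ‖PN (α ((⇑R)^[k] x))‖ := hN (k + 1) _ (hPN _)
      _ ≤ c * t ^ (k + 1) * (d * A) := by
          exact mul_le_mul_of_nonneg_left (hPNbd _)
            (mul_nonneg hc0 (pow_nonneg ht0.le _))
      _ = c * d * A * t * t ^ k := by ring
  have hgeo : HasSum (fun k : ℕ => t ^ k) (1 - t)⁻¹ :=
    hasSum_geometric_of_lt_one ht0.le ht1
  have hS1 : ‖∑' k : ℕ, (T ^ k) (PM (α ((⇑R.symm)^[k + 1] x)))‖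
      ≤ c * d * A * (1 - t)⁻¹ := by
    have := hgeo.mul_left (c * d * A)
    exact tsum_of_norm_bounded this hb1
  have hS2 : ‖∑' k : ℕ, (T.symm ^ (k + 1)) (PN (α ((⇑R)^[k] x)))‖
      ≤ c * d * A * t * (1 - t)⁻¹ := by
    have := hgeo.mul_left (c * d * A * t)
    exact tsum_of_norm_bounded this hb2
  have ht' : (1:ℝ) - t ≠ 0 := by linarith
  calc ‖φ x‖ ≤ ‖∑' k : ℕ, (T ^ k) (PM (α ((⇑R.symm)^[k + 1] x)))‖
        + ‖∑' k : ℕ, (T.symm ^ (k + 1)) (PN (α ((⇑R)^[k] x)))‖ := by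
        rw [hφ x]; exact norm_sub_le _ _
    _ ≤ c * d * A * (1 - t)⁻¹ + c * d * A * t * (1 - t)⁻¹ := add_le_add hS1 hS2
    _ = c * d * (1 + t) / (1 - t) * A := by field_simp
end

section
/- Let T be a generalized hyperbolic operator on a Banach space X with splitting X = M ⊕ N, and let Y denote the closed subspace M + T⁻¹(N). For any uniform homeomorphism R : X → X, the bounded linear map Ψ : U_b(X;Y) → U_b(X) defined by Ψ(φ) = φ ∘ R − T ∘ φ is bijective. -/
/-- An invertible bounded operator is generalized hyperbolic with respect to the
splitting `X = M ⊕ N` if `M`, `N` are closed, `T(M) ⊆ M`, `T⁻¹(N) ⊆ N`,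
`σ(T|_M) ⊆ 𝔻` and `σ(T⁻¹|_N) ⊆ 𝔻`. -/
def IsGeneralizedHyperbolic {X : Type*} [NormedAddCommGroup X] [NormedSpace ℂ X]
    [CompleteSpace X] (T : X ≃L[ℂ] X) (M N : Submodule ℂ X) : Prop :=
  IsClosed (M : Set X) ∧ IsClosed (N : Set X) ∧ IsCompl M N ∧
  (∃ hM : ∀ x ∈ M, T x ∈ M,
    spectrum ℂ (LinearMap.restrict ((T : X →L[ℂ] X) : X →ₗ[ℂ] X) hM) ⊆ Metric.ball (0 : ℂ) 1) ∧
  (∃ hN : ∀ x ∈ N, T.symm x ∈ N,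
    spectrum ℂ (LinearMap.restrict ((T.symm : X →L[ℂ] X) : X →ₗ[ℂ] X) hN) ⊆ Metric.ball (0 : ℂ) 1)

/-!
Split `α = P α + Q α` along `X = M ⊕ N`. By Gelfand's formula the spectral conditions make
`‖(T|_M)ⁿ‖` and `‖(T⁻¹|_N)ⁿ‖` summable, so the Neumann-type series `f = ∑ Tⁿ (P α ∘ R⁻ⁿ)` in `M`
and `g = ∑ T⁻ⁿ (Q α ∘ Rⁿ)` in `N` converge uniformly, and `φ = f ∘ R⁻¹ - T⁻¹ g`, which takes
values in `M + T⁻¹ N`, solves `φ ∘ R - T ∘ φ = α`. Conversely, on `M + T⁻¹ N` the operator `T`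
commutes with the projections onto `M` and `N` (because `T⁻¹ N ⊆ N`), so the components of a
bounded `Y`-valued solution of `g ∘ R = T ∘ g` satisfy `g_M = T g_M ∘ R⁻¹` and
`g_N = T⁻¹ g_N ∘ R`; iterating, they are bounded by `‖(T|_M)ⁿ‖` resp. `‖(T⁻¹|_N)ⁿ‖` times a
constant, hence vanish.
-/

open Filter Topology

theorem UniformContinuous.finset_sum {ι X E : Type*} [UniformSpace X] [NormedAddCommGroup E]
    {f : ι → X → E} (s : Finset ι) (hf : ∀ i ∈ s, UniformContinuous (f i)) :
    UniformContinuous fun x => ∑ i ∈ s, f i x := by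
  classical
  induction s using Finset.induction with
  | empty => simpa using uniformContinuous_const
  | insert i s hi ih =>
    simp only [Finset.sum_insert hi]
    exact (hf i (s.mem_insert_self i)).add (ih fun j hj => hf j (Finset.mem_insert_of_mem hj))

theorem uniformContinuous_tsum_of_norm_le {X E : Type*} [UniformSpace X] [NormedAddCommGroup E]
    [CompleteSpace E] {f : ℕ → X → E} {u : ℕ → ℝ} (hu : Summable u) (hfu : ∀ n x, ‖f n x‖ ≤ u n)
    (hf : ∀ n, UniformContinuous (f n)) :
    UniformContinuous fun x => ∑' n, f n x :=
  (tendstoUniformly_tsum_nat hu hfu).uniformContinuous <|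
    Frequently.of_forall fun _ => UniformContinuous.finset_sum _ fun n _ => hf n

theorem summable_norm_pow_of_spectrum_subset_ball {A : Type*} [NormedRing A] [NormedAlgebra ℂ A]
    [CompleteSpace A] (a : A) (h : spectrum ℂ a ⊆ Metric.ball 0 1) :
    Summable fun n => ‖a ^ n‖ := by
  rcases subsingleton_or_nontrivial A with hA | hA
  · simp [Subsingleton.elim _ (0 : A)]
  have hρ : spectralRadius ℂ a < (1 : NNReal) := spectrum.spectralRadius_lt_of_forall_lt a
    fun z hz => by simpa [← NNReal.coe_lt_coe] using h hz
  obtain ⟨r, hρr, hr1⟩ := ENNReal.lt_iff_exists_nnreal_btwn.1 hρ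
  refine Summable.of_norm_bounded_eventually_nat
    (summable_geometric_of_lt_one r.coe_nonneg (mod_cast hr1)) ?_
  have hgelfand :=
    (spectrum.pow_nnnorm_pow_one_div_tendsto_nhds_spectralRadius a).eventually_lt_const hρr
  filter_upwards [hgelfand, eventually_gt_atTop 0] with n hn hn0
  rw [one_div, ENNReal.rpow_inv_lt_iff (by positivity), ENNReal.rpow_natCast] at hn
  rw [norm_norm]
  exact_mod_cast hn.le

section FixedPoint

variable {𝕜 X E : Type*} [NontriviallyNormedField 𝕜] [NormedAddCommGroup E] [NormedSpace 𝕜 E]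
  (A : E →L[𝕜] E) {ρ : X → X}

theorem exists_uniformContinuous_bounded_eq_add_apply_comp [UniformSpace X] [CompleteSpace E]
    (hA : Summable fun n => ‖A ^ n‖) (hρ : UniformContinuous ρ) {β : X → E}
    (hβ : UniformContinuous β) {C : ℝ} (hC : ∀ x, ‖β x‖ ≤ C) :
    ∃ f : X → E, UniformContinuous f ∧ (∃ B, ∀ x, ‖f x‖ ≤ B) ∧
      ∀ x, f x = β x + A (f (ρ x)) := by
  set g : ℕ → X → E := fun n x => (A ^ n) (β (ρ^[n] x))
  have hg : ∀ n x, ‖g n x‖ ≤ ‖A ^ n‖ * C := fun n x => (A ^ n).le_opNorm_of_le (hC _)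
  have hAC : Summable fun n => ‖A ^ n‖ * C := hA.mul_right C
  have hsum : ∀ x, Summable fun n => g n x := fun x => hAC.of_norm_bounded (hg · x)
  refine ⟨fun x => ∑' n, g n x,
    uniformContinuous_tsum_of_norm_le hAC hg fun n => (A ^ n).uniformContinuous.comp
      (hβ.comp (UniformContinuous.iterate ρ n hρ)),
    ⟨∑' n, ‖A ^ n‖ * C, fun x => tsum_of_norm_bounded hAC.hasSum (hg · x)⟩, fun x => ?_⟩
  calc ∑' n, g n x = g 0 x + ∑' n, g (n + 1) x := (hsum x).tsum_eq_zero_add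
    _ = β x + ∑' n, A (g n (ρ x)) := by
      simp only [g, pow_succ', mul_apply_eq_comp, Function.iterate_succ_apply, pow_zero,
        one_apply_eq_self, Function.iterate_zero_apply]
    _ = β x + A (∑' n, g n (ρ x)) := by rw [A.map_tsum (hsum (ρ x))]

theorem eq_pow_apply_iterate_of_eq_apply_comp {g : X → E} (h : ∀ x, g x = A (g (ρ x))) (n : ℕ)
    (x : X) : g x = (A ^ n) (g (ρ^[n] x)) := by
  induction n generalizing x with
  | zero => simp
  | succ n ih =>
    rw [pow_succ, mul_apply_eq_comp, Function.iterate_succ_apply', ← h, ← ih]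

theorem eq_zero_of_bounded_of_eq_apply_comp (hA : Tendsto (fun n => ‖A ^ n‖) atTop (𝓝 0))
    {g : X → E} {C : ℝ} (hC : ∀ x, ‖g x‖ ≤ C) (h : ∀ x, g x = A (g (ρ x))) : g = 0 := by
  funext x
  have hle : ∀ n, ‖g x‖ ≤ ‖A ^ n‖ * C := fun n => by
    rw [eq_pow_apply_iterate_of_eq_apply_comp A h n x]
    exact (A ^ n).le_opNorm_of_le (hC _)
  have hlim : Tendsto (fun n => ‖A ^ n‖ * C) atTop (𝓝 0) := by simpa using hA.mul_const C
  exact norm_le_zero_iff.1 (ge_of_tendsto' hlim hle)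

end FixedPoint

theorem Submodule.projection_comm_apply_of_mem_sup {R E : Type*} [Ring R] [AddCommGroup E]
    [Module R E] {p q : Submodule R E} (h : IsCompl p q) (f : E →ₗ[R] E) {y : E}
    (hy : y ∈ p ⊓ p.comap f ⊔ q ⊓ q.comap f) :
    p.projection q h (f y) = f (p.projection q h y) := by
  obtain ⟨a, ha, b, hb, rfl⟩ := Submodule.mem_sup.1 hy
  obtain ⟨ha, hfa⟩ := Submodule.mem_inf.1 ha
  obtain ⟨hb, hfb⟩ := Submodule.mem_inf.1 hb
  simp only [map_add, projection_apply_of_mem_left h ha, projection_apply_of_mem_left h hfa,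
    (projection_apply_eq_zero_iff h).2 hb, (projection_apply_eq_zero_iff h).2 hfb, add_zero]

section GeneralizedHyperbolic

variable {X : Type*} [NormedAddCommGroup X] [NormedSpace ℂ X] (T : X ≃L[ℂ] X)
  {M N : Submodule ℂ X} (hMN : M.IsTopCompl N) (hTM : ∀ x ∈ M, T x ∈ M)
  (hTN : ∀ x ∈ N, T.symm x ∈ N) {R : X ≃ X}

include hMN in
theorem exists_uniformContinuous_bounded_apply_sub_apply_eq [CompleteSpace M] [CompleteSpace N]
    (hA : Summable fun n => ‖((T : X →L[ℂ] X).restrict hTM) ^ n‖)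
    (hB : Summable fun n => ‖((T.symm : X →L[ℂ] X).restrict hTN) ^ n‖)
    (hR : UniformContinuous R) (hR' : UniformContinuous R.symm) {α : X → X}
    (hα : UniformContinuous α) {C : ℝ} (hC : ∀ x, ‖α x‖ ≤ C) :
    ∃ φ : X → X, (UniformContinuous φ ∧ (∃ B, ∀ x, ‖φ x‖ ≤ B) ∧
      ∀ x, φ x ∈ M ⊔ N.comap ((T : X →L[ℂ] X) : X →ₗ[ℂ] X)) ∧
      ∀ x, φ (R x) - T (φ x) = α x := by
  set P := M.projectionOntoL N hMN
  set Q := N.projectionOntoL M hMN.symm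
  obtain ⟨f, hf, ⟨Bf, hBf⟩, hfeq⟩ := exists_uniformContinuous_bounded_eq_add_apply_comp _ hA hR'
    (P.uniformContinuous.comp hα) (fun x => P.le_opNorm_of_le (hC x))
  obtain ⟨g, hg, ⟨Bg, hBg⟩, hgeq⟩ := exists_uniformContinuous_bounded_eq_add_apply_comp _ hB hR
    (Q.uniformContinuous.comp hα) (fun x => Q.le_opNorm_of_le (hC x))
  refine ⟨fun x => f (R.symm x) - T.symm (g x),
    ⟨?_, ⟨Bf + ‖(T.symm : X →L[ℂ] X)‖ * Bg, fun x => ?_⟩, fun x => ?_⟩, fun x => ?_⟩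
  · exact (uniformContinuous_subtype_val.comp (hf.comp hR')).sub
      ((T.symm : X →L[ℂ] X).uniformContinuous.comp (uniformContinuous_subtype_val.comp hg))
  · exact (norm_sub_le _ _).trans
      (add_le_add (hBf _) ((T.symm : X →L[ℂ] X).le_opNorm_of_le (hBg x)))
  · exact Submodule.sub_mem _ (Submodule.mem_sup_left (f _).2)
      (Submodule.mem_sup_right (by simp [(g x).2]))
  · have hfx : (f x : X) = M.projectionL N hMN (α x) + T (f (R.symm x)) :=
      congrArg Subtype.val (hfeq x)
    have hgx : (g x : X) = N.projectionL M hMN.symm (α x) + T.symm (g (R x)) :=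
      congrArg Subtype.val (hgeq x)
    simp only [Equiv.symm_apply_apply, map_sub, ContinuousLinearEquiv.apply_symm_apply]
    conv_rhs => rw [← M.projectionL_add_projectionL_eq_self hMN (α x)]
    rw [hfx, hgx]
    abel

include hMN hTN in
theorem eq_zero_of_bounded_of_apply_eq_apply
    (hA : Tendsto (fun n => ‖((T : X →L[ℂ] X).restrict hTM) ^ n‖) atTop (𝓝 0))
    (hB : Tendsto (fun n => ‖((T.symm : X →L[ℂ] X).restrict hTN) ^ n‖) atTop (𝓝 0))
    {g : X → X} {C : ℝ} (hC : ∀ x, ‖g x‖ ≤ C)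
    (hgY : ∀ x, g x ∈ M ⊔ N.comap ((T : X →L[ℂ] X) : X →ₗ[ℂ] X)) (hgR : ∀ x, g (R x) = T (g x)) :
    g = 0 := by
  have hY : M ⊔ N.comap ((T : X →L[ℂ] X) : X →ₗ[ℂ] X) ≤
      M ⊓ M.comap ((T : X →L[ℂ] X) : X →ₗ[ℂ] X) ⊔ N ⊓ N.comap ((T : X →L[ℂ] X) : X →ₗ[ℂ] X) :=
    sup_le_sup (le_inf le_rfl hTM)
      (le_inf (fun v hv => by simpa using hTN (T v) hv) le_rfl)
  have hP : ∀ x, M.projectionL N hMN (T (g x)) = T (M.projectionL N hMN (g x)) := fun x =>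
    M.projection_comm_apply_of_mem_sup hMN.isCompl _ (hY (hgY x))
  have hQ : ∀ x, N.projectionL M hMN.symm (T (g x)) = T (N.projectionL M hMN.symm (g x)) :=
    fun x => N.projection_comm_apply_of_mem_sup hMN.symm.isCompl _ <| by
      rw [sup_comm]; exact hY (hgY x)
  have hm := eq_zero_of_bounded_of_eq_apply_comp _ hA (ρ := R.symm)
    (g := fun x => M.projectionOntoL N hMN (g x))
    (fun x => (M.projectionOntoL N hMN).le_opNorm_of_le (hC x)) fun x => Subtype.ext <| by
      show M.projectionL N hMN (g x) = T (M.projectionL N hMN (g (R.symm x)))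
      rw [← hP, ← hgR, R.apply_symm_apply]
  have hn := eq_zero_of_bounded_of_eq_apply_comp _ hB (ρ := R)
    (g := fun x => N.projectionOntoL M hMN.symm (g x))
    (fun x => (N.projectionOntoL M hMN.symm).le_opNorm_of_le (hC x)) fun x => Subtype.ext <| by
      show N.projectionL M hMN.symm (g x) = T.symm (N.projectionL M hMN.symm (g (R x)))
      rw [hgR, hQ, T.symm_apply_apply]
  funext x
  have hmx : M.projectionL N hMN (g x) = 0 := congrArg Subtype.val (congrFun hm x)
  have hnx : N.projectionL M hMN.symm (g x) = 0 := congrArg Subtype.val (congrFun hn x)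
  rw [← M.projectionL_add_projectionL_eq_self hMN (g x), hmx, hnx, add_zero, Pi.zero_apply]

end GeneralizedHyperbolic

/-- For a generalized hyperbolic `T` with `Y = M + T⁻¹(N)` and any
uniform homeomorphism `R`, the map `Ψ(φ) = φ ∘ R − T ∘ φ` is a bijection from
`U_b(X;Y)` onto `U_b(X)`: every bounded uniformly continuous `α : X → X` has a
unique bounded uniformly continuous `Y`-valued preimage. -/
theorem psi_bijective
    {X : Type*} [NormedAddCommGroup X] [NormedSpace ℂ X] [CompleteSpace X]
    (T : X ≃L[ℂ] X) (M N : Submodule ℂ X)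
    (hGH : IsGeneralizedHyperbolic T M N)
    (Y : Submodule ℂ X)
    (hY : Y = M ⊔ N.comap ((T : X →L[ℂ] X) : X →ₗ[ℂ] X))
    (R : X ≃ X) (hR : UniformContinuous ⇑R) (hR' : UniformContinuous ⇑R.symm) :
    ∀ α : X → X, UniformContinuous α → (∃ C, ∀ x, ‖α x‖ ≤ C) →
      ∃! φ : X → X,
        (UniformContinuous φ ∧ (∃ C, ∀ x, ‖φ x‖ ≤ C) ∧ (∀ x, φ x ∈ Y)) ∧
        ∀ x, φ (R x) - T (φ x) = α x := by
  rintro α hα ⟨C, hC⟩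
  subst hY
  obtain ⟨hMc, hNc, hMN, ⟨hTM, hσM⟩, ⟨hTN, hσN⟩⟩ := hGH
  have : CompleteSpace M := hMc.completeSpace_coe
  have : CompleteSpace N := hNc.completeSpace_coe
  have hMN := Submodule.IsCompl.isTopCompl_of_isClosed hMN hMc hNc
  have hA := summable_norm_pow_of_spectrum_subset_ball ((T : X →L[ℂ] X).restrict hTM)
    (by rwa [ContinuousLinearMap.spectrum_eq])
  have hB := summable_norm_pow_of_spectrum_subset_ball ((T.symm : X →L[ℂ] X).restrict hTN)
    (by rwa [ContinuousLinearMap.spectrum_eq])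
  obtain ⟨φ, ⟨hφ, ⟨Cφ, hCφ⟩, hφY⟩, hφR⟩ :=
    exists_uniformContinuous_bounded_apply_sub_apply_eq T hMN hTM hTN hA hB hR hR' hα hC
  refine ⟨φ, ⟨⟨hφ, ⟨Cφ, hCφ⟩, hφY⟩, hφR⟩, fun ψ ⟨⟨_, ⟨Cψ, hCψ⟩, hψY⟩, hψR⟩ => sub_eq_zero.1 <|
    eq_zero_of_bounded_of_apply_eq_apply T hMN hTM hTN hA.tendsto_atTop_zero
      hB.tendsto_atTop_zero (R := R) (g := ψ - φ)
      (fun y => (norm_sub_le _ _).trans (add_le_add (hCψ y) (hCφ y)))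
      (fun y => sub_mem (hψY y) (hφY y)) fun y => ?_⟩
  rw [Pi.sub_apply, Pi.sub_apply, map_sub, sub_eq_sub_iff_sub_eq_sub, hψR, hφR]
end

section
/- Let T be generalized hyperbolic with splitting X = M ⊕ N and Y = M + T⁻¹(N). If φ ∈ U_b(X;Y) satisfies φ(Rx) − T(φ(x)) = α(x) for all x ∈ X, where R is a uniform homeomorphism and α ∈ U_b(X), then for all x ∈ X: P_N(φ(x)) = −Σ_{k=1}^∞ T^{-k} P_N(α(R^{k-1}x)) and P_M(φ(x)) = Σ_{k=0}^∞ Tᵏ P_M(α(R^{-k-1}x)). In particular, φ is uniquely determined by α. -/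
open Filter Topology

theorem hasSum_of_bounded_recursion {𝕜 E : Type*} [NontriviallyNormedField 𝕜]
    [NormedAddCommGroup E] [NormedSpace 𝕜 E] [CompleteSpace E] {A : E →L[𝕜] E}
    (hA : Summable fun n => ‖A ^ n‖) {u w : ℕ → E} (hu : ∃ C, ∀ n, ‖u n‖ ≤ C)
    (hw : ∃ C, ∀ n, ‖w n‖ ≤ C) (hrec : ∀ n, u n = A (u (n + 1)) + w n) :
    HasSum (fun k => (A ^ k) (w k)) (u 0) := by
  obtain ⟨Cu, hCu⟩ := hu
  obtain ⟨Cw, hCw⟩ := hw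
  have hpartial : ∀ n, u 0 = (A ^ n) (u n) + ∑ k ∈ Finset.range n, (A ^ k) (w k) := by
    intro n
    induction n with
    | zero => simp
    | succ n ih =>
      rw [ih, hrec n, map_add, Finset.sum_range_succ, pow_succ, mul_apply_eq_comp]
      abel
  have hsummable : Summable fun k => (A ^ k) (w k) :=
    (hA.mul_right Cw).of_norm_bounded fun k => (A ^ k).le_opNorm_of_le (hCw k)
  have htail : Tendsto (fun n => (A ^ n) (u n)) atTop (𝓝 0) := by
    refine squeeze_zero_norm (fun n => (A ^ n).le_opNorm_of_le (hCu n)) ?_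
    simpa using hA.tendsto_atTop_zero.mul_const Cu
  rw [hsummable.hasSum_iff_tendsto_nat]
  refine (sub_zero (u 0) ▸ tendsto_const_nhds.sub htail).congr fun n => ?_
  rw [hpartial n]
  abel

instance ContinuousLinearEquiv.instIsOneApplyEqSelf {R M : Type*} [Semiring R] [TopologicalSpace M]
    [AddCommMonoid M] [Module R M] : IsOneApplyEqSelf (M ≃L[R] M) M where
  one_apply_eq_self _ := rfl

instance ContinuousLinearEquiv.instIsMulApplyEqComp {R M : Type*} [Semiring R] [TopologicalSpace M]
    [AddCommMonoid M] [Module R M] : IsMulApplyEqComp (M ≃L[R] M) M where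
  mul_apply_eq_comp _ _ _ := rfl

theorem ContinuousLinearMap.coe_restrict_pow_apply {R M : Type*} [Semiring R] [TopologicalSpace M]
    [AddCommMonoid M] [Module R M] {f : M →L[R] M} {p : Submodule R M} (hf : ∀ x ∈ p, f x ∈ p)
    (n : ℕ) (x : p) : (((f.restrict hf) ^ n) x : M) = f^[n] x := by
  rw [FunLike.coe_pow_eq_iterate]
  exact Function.Semiconj.iterate_right (f := Subtype.val) (ga := f.restrict hf) (gb := f)
    (fun _ => rfl) n x

theorem ContinuousLinearMap.exists_norm_apply_le {𝕜 E F ι : Type*} [NontriviallyNormedField 𝕜]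
    [NormedAddCommGroup E] [NormedSpace 𝕜 E] [NormedAddCommGroup F] [NormedSpace 𝕜 F]
    (f : E →L[𝕜] F) {v : ι → E} (hv : ∃ C, ∀ i, ‖v i‖ ≤ C) : ∃ C, ∀ i, ‖f (v i)‖ ≤ C :=
  let ⟨C, hC⟩ := hv
  ⟨‖f‖ * C, fun i => f.le_opNorm_of_le (hC i)⟩

section Restrict

variable {X : Type*} [NormedAddCommGroup X] [NormedSpace ℂ X] [CompleteSpace X]

theorem summable_norm_pow_restrict_of_spectrum_subset_ball {f : X →L[ℂ] X} {N : Submodule ℂ X}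
    (hN : IsClosed (N : Set X)) (hf : ∀ x ∈ N, f x ∈ N)
    (hspec : spectrum ℂ ((f : X →ₗ[ℂ] X).restrict hf) ⊆ Metric.ball 0 1) :
    Summable fun n => ‖(f.restrict hf) ^ n‖ := by
  have : CompleteSpace N := hN.completeSpace_coe
  have hspec' : spectrum ℂ (f.restrict hf) ⊆ Metric.ball 0 1 := by
    rw [ContinuousLinearMap.spectrum_eq, ContinuousLinearMap.toLinearMap_restrict]
    exact hspec
  exact summable_norm_pow_of_spectrum_subset_ball (f.restrict hf) hspec'

theorem hasSum_iterate_of_bounded_recursion_of_mem {f : X →L[ℂ] X} {N : Submodule ℂ X}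
    (hN : IsClosed (N : Set X)) (hf : ∀ x ∈ N, f x ∈ N)
    (hspec : spectrum ℂ ((f : X →ₗ[ℂ] X).restrict hf) ⊆ Metric.ball 0 1)
    {u w : ℕ → X} (huN : ∀ n, u n ∈ N) (hwN : ∀ n, w n ∈ N)
    (hu : ∃ C, ∀ n, ‖u n‖ ≤ C) (hw : ∃ C, ∀ n, ‖w n‖ ≤ C)
    (hrec : ∀ n, u n = f (u (n + 1)) + w n) :
    HasSum (fun k => f^[k] (w k)) (u 0) := by
  have : CompleteSpace N := hN.completeSpace_coe
  have hsum := hasSum_of_bounded_recursion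
    (summable_norm_pow_restrict_of_spectrum_subset_ball hN hf hspec)
    (u := fun n => ⟨u n, huN n⟩) (w := fun n => ⟨w n, hwN n⟩) hu hw
    fun n => Subtype.ext (hrec n)
  simpa only [Submodule.subtypeL_apply, ContinuousLinearMap.coe_restrict_pow_apply]
    using hsum.mapL N.subtypeL

end Restrict

section Projections

variable {R E : Type*} [Ring R] [AddCommGroup E] [Module R E] {M N : Submodule R E}

theorem apply_eq_zero_of_mem_of_disjoint (hMN : Disjoint M N) {P Q : E → E}
    (hP : ∀ x, P x ∈ M) (hQ : ∀ x, Q x ∈ N) (hPQ : ∀ x, P x + Q x = x) {v : E} (hv : v ∈ M) :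
    Q v = 0 := by
  refine Submodule.disjoint_def.mp hMN _ ?_ (hQ v)
  rw [eq_sub_of_add_eq' (hPQ v)]
  exact M.sub_mem hv (hP v)

variable [TopologicalSpace E]

theorem proj_apply_comm_of_mem_sup_comap {T : E ≃L[R] E} (hMN : Disjoint M N)
    (hTM : ∀ x ∈ M, T x ∈ M) (hTN : ∀ x ∈ N, T.symm x ∈ N) {PM PN : E →L[R] E}
    (hPM : ∀ x, PM x ∈ M) (hPN : ∀ x, PN x ∈ N) (hP : ∀ x, PM x + PN x = x) {y : E}
    (hy : y ∈ M ⊔ N.comap ((T : E →L[R] E) : E →ₗ[R] E)) :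
    PN (T y) = T (PN y) := by
  have hPN_M {v : E} (hv : v ∈ M) : PN v = 0 :=
    apply_eq_zero_of_mem_of_disjoint hMN hPM hPN hP hv
  have hPN_N {v : E} (hv : v ∈ N) : PN v = v := by
    have hPM_N : PM v = 0 := apply_eq_zero_of_mem_of_disjoint hMN.symm hPN hPM
      (fun x => (add_comm _ _).trans (hP x)) hv
    simpa [hPM_N] using hP v
  obtain ⟨m, hm, t, ht, rfl⟩ := Submodule.mem_sup.mp hy
  have hTt : T t ∈ N := ht
  have htN : t ∈ N := by simpa using hTN _ hTt
  rw [map_add, map_add, map_add, hPN_M (hTM m hm), hPN_M hm, hPN_N hTt, hPN_N htN, zero_add,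
    zero_add]

end Projections

section Components

variable {X : Type*} [NormedAddCommGroup X] [NormedSpace ℂ X] [CompleteSpace X]
  {T : X ≃L[ℂ] X} {P : X →L[ℂ] X} {α φ : X → X}

theorem proj_apply_eq_tsum_of_sub_eq {M : Submodule ℂ X} (hM : IsClosed (M : Set X))
    (hTM : ∀ x ∈ M, T x ∈ M)
    (hspec : spectrum ℂ (LinearMap.restrict ((T : X →L[ℂ] X) : X →ₗ[ℂ] X) hTM) ⊆
      Metric.ball (0 : ℂ) 1)
    (hP : ∀ x, P x ∈ M) (R : X ≃ X) (hα : ∃ C, ∀ x, ‖α x‖ ≤ C) (hφ : ∃ C, ∀ x, ‖φ x‖ ≤ C)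
    (hcomm : ∀ x, P (T (φ x)) = T (P (φ x))) (heq : ∀ x, φ (R x) - T (φ x) = α x) (x : X) :
    P (φ x) = ∑' k : ℕ, (T ^ k) (P (α ((⇑R.symm)^[k + 1] x))) := by
  have hrec (y : X) : P (φ (R y)) = T (P (φ y)) + P (α y) := by
    rw [← hcomm, ← map_add, ← heq y, add_sub_cancel]
  have hstep (n : ℕ) : P (φ ((⇑R.symm)^[n] x)) =
      T (P (φ ((⇑R.symm)^[n + 1] x))) + P (α ((⇑R.symm)^[n + 1] x)) := by
    rw [← hrec, Function.iterate_succ_apply', R.apply_symm_apply]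
  have hsum := hasSum_iterate_of_bounded_recursion_of_mem (f := (T : X →L[ℂ] X)) hM hTM hspec
    (u := fun n => P (φ ((⇑R.symm)^[n] x))) (w := fun n => P (α ((⇑R.symm)^[n + 1] x)))
    (fun _ => hP _) (fun _ => hP _)
    (P.exists_norm_apply_le (hφ.imp fun _ hC _ => hC _))
    (P.exists_norm_apply_le (hα.imp fun _ hC _ => hC _))
    hstep
  simpa only [FunLike.coe_pow_eq_iterate, ContinuousLinearEquiv.coe_coe,
    Function.iterate_zero_apply] using hsum.tsum_eq.symm

theorem proj_apply_eq_neg_tsum_of_sub_eq {N : Submodule ℂ X} (hN : IsClosed (N : Set X))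
    (hTN : ∀ x ∈ N, T.symm x ∈ N)
    (hspec : spectrum ℂ (LinearMap.restrict ((T.symm : X →L[ℂ] X) : X →ₗ[ℂ] X) hTN) ⊆
      Metric.ball (0 : ℂ) 1)
    (hP : ∀ x, P x ∈ N) {R : X → X} (hα : ∃ C, ∀ x, ‖α x‖ ≤ C) (hφ : ∃ C, ∀ x, ‖φ x‖ ≤ C)
    (hcomm : ∀ x, P (T (φ x)) = T (P (φ x))) (heq : ∀ x, φ (R x) - T (φ x) = α x) (x : X) :
    P (φ x) = -∑' k : ℕ, (T.symm ^ (k + 1)) (P (α (R^[k] x))) := by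
  have hrec (y : X) : P (φ y) = T.symm (P (φ (R y))) + -T.symm (P (α y)) := by
    rw [← heq y, map_sub, hcomm, map_sub, T.symm_apply_apply]
    abel
  have hsum := hasSum_iterate_of_bounded_recursion_of_mem (f := (T.symm : X →L[ℂ] X)) hN hTN
    hspec (u := fun n => P (φ (R^[n] x))) (w := fun n => -T.symm (P (α (R^[n] x))))
    (fun _ => hP _) (fun _ => N.neg_mem (hTN _ (hP _)))
    (P.exists_norm_apply_le (hφ.imp fun _ hC _ => hC _))
    (((T.symm : X →L[ℂ] X).exists_norm_apply_le (P.exists_norm_apply_le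
      (hα.imp fun _ hC _ => hC _))).imp fun _ hC n => (norm_neg _).trans_le (hC n))
    fun n => by rw [hrec, Function.iterate_succ_apply']; rfl
  rw [← tsum_neg]
  refine hsum.tsum_eq.symm.trans (tsum_congr fun k => ?_)
  rw [ContinuousLinearEquiv.coe_coe, ← FunLike.coe_pow_eq_iterate, map_neg, pow_succ,
    mul_apply_eq_comp]

end Components

theorem solution_formula_and_uniqueness_general
    {X : Type*} [NormedAddCommGroup X] [NormedSpace ℂ X] [CompleteSpace X]
    (T : X ≃L[ℂ] X) (M N : Submodule ℂ X)
    (hGH : IsGeneralizedHyperbolic T M N)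
    (PM PN : X →L[ℂ] X)
    (hPM : ∀ x, PM x ∈ M) (hPN : ∀ x, PN x ∈ N) (hP : ∀ x, PM x + PN x = x)
    (Y : Submodule ℂ X)
    (hY : Y = M ⊔ N.comap ((T : X →L[ℂ] X) : X →ₗ[ℂ] X))
    (R : X ≃ X)
    (α : X → X) (hαbd : ∃ C, ∀ x, ‖α x‖ ≤ C)
    (φ : X → X) (hφbd : ∃ C, ∀ x, ‖φ x‖ ≤ C)
    (hφY : ∀ x, φ x ∈ Y)
    (hφeq : ∀ x, φ (R x) - T (φ x) = α x) :
    (∀ x, PN (φ x) = - ∑' k : ℕ, (T.symm ^ (k + 1)) (PN (α ((⇑R)^[k] x)))) ∧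
    (∀ x, PM (φ x) = ∑' k : ℕ, (T ^ k) (PM (α ((⇑R.symm)^[k + 1] x)))) ∧
    (∀ φ' : X → X, UniformContinuous φ' → (∃ C, ∀ x, ‖φ' x‖ ≤ C) →
      (∀ x, φ' x ∈ Y) → (∀ x, φ' (R x) - T (φ' x) = α x) → φ' = φ) := by
  obtain ⟨hMc, hNc, hMN, ⟨hTM, hMspec⟩, ⟨hTN, hNspec⟩⟩ := hGH
  have hcommN {ψ : X → X} (hψY : ∀ x, ψ x ∈ Y) (x : X) : PN (T (ψ x)) = T (PN (ψ x)) :=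
    proj_apply_comm_of_mem_sup_comap hMN.disjoint hTM hTN hPM hPN hP (hY ▸ hψY x)
  have hcommM {ψ : X → X} (hψY : ∀ x, ψ x ∈ Y) (x : X) : PM (T (ψ x)) = T (PM (ψ x)) := by
    rw [eq_sub_of_add_eq (hP (T (ψ x))), hcommN hψY, ← map_sub, ← eq_sub_of_add_eq (hP _)]
  have hformulas {ψ : X → X} (hψbd : ∃ C, ∀ x, ‖ψ x‖ ≤ C) (hψY : ∀ x, ψ x ∈ Y)
      (hψeq : ∀ x, ψ (R x) - T (ψ x) = α x) :
      (∀ x, PN (ψ x) = - ∑' k : ℕ, (T.symm ^ (k + 1)) (PN (α ((⇑R)^[k] x)))) ∧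
      (∀ x, PM (ψ x) = ∑' k : ℕ, (T ^ k) (PM (α ((⇑R.symm)^[k + 1] x)))) :=
    ⟨proj_apply_eq_neg_tsum_of_sub_eq hNc hTN hNspec hPN hαbd hψbd (hcommN hψY) hψeq,
      proj_apply_eq_tsum_of_sub_eq hMc hTM hMspec hPM R hαbd hψbd (hcommM hψY) hψeq⟩
  obtain ⟨hφN, hφM⟩ := hformulas hφbd hφY hφeq
  refine ⟨hφN, hφM, fun φ' _ hφ'bd hφ'Y hφ'eq => funext fun x => ?_⟩
  obtain ⟨hφ'N, hφ'M⟩ := hformulas hφ'bd hφ'Y hφ'eq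
  rw [← hP (φ' x), ← hP (φ x), hφ'N, hφ'M, hφN, hφM]

/-- If `φ ∈ U_b(X;Y)` solves `φ(Rx) − T(φ(x)) = α(x)`, then its
components are given by the explicit series
`P_N(φ(x)) = −Σ_{k≥1} T^{-k} P_N(α(R^{k-1}x))` and
`P_M(φ(x)) = Σ_{k≥0} Tᵏ P_M(α(R^{-k-1}x))`; in particular `φ` is uniquely
determined by `α`. -/
theorem solution_formula_and_uniqueness
    {X : Type*} [NormedAddCommGroup X] [NormedSpace ℂ X] [CompleteSpace X]
    (T : X ≃L[ℂ] X) (M N : Submodule ℂ X)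
    (hGH : IsGeneralizedHyperbolic T M N)
    (PM PN : X →L[ℂ] X)
    (hPM : ∀ x, PM x ∈ M) (hPN : ∀ x, PN x ∈ N) (hP : ∀ x, PM x + PN x = x)
    (Y : Submodule ℂ X)
    (hY : Y = M ⊔ N.comap ((T : X →L[ℂ] X) : X →ₗ[ℂ] X))
    (R : X ≃ X) (hR : UniformContinuous ⇑R) (hR' : UniformContinuous ⇑R.symm)
    (α : X → X) (hα : UniformContinuous α) (hαbd : ∃ C, ∀ x, ‖α x‖ ≤ C)
    (φ : X → X) (hφuc : UniformContinuous φ) (hφbd : ∃ C, ∀ x, ‖φ x‖ ≤ C)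
    (hφY : ∀ x, φ x ∈ Y)
    (hφeq : ∀ x, φ (R x) - T (φ x) = α x) :
    (∀ x, PN (φ x) = - ∑' k : ℕ, (T.symm ^ (k + 1)) (PN (α ((⇑R)^[k] x)))) ∧
    (∀ x, PM (φ x) = ∑' k : ℕ, (T ^ k) (PM (α ((⇑R.symm)^[k + 1] x)))) ∧
    (∀ φ' : X → X, UniformContinuous φ' → (∃ C, ∀ x, ‖φ' x‖ ≤ C) →
      (∀ x, φ' x ∈ Y) → (∀ x, φ' (R x) - T (φ' x) = α x) → φ' = φ) :=
  solution_formula_and_uniqueness_general T M N hGH PM PN hPM hPN hP Y hY R α hαbd φ hφbd hφY hφeq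
end

section
/- Let Y = ℓ_p(ℤ) (1 ≤ p < ∞) or c₀(ℤ), and let w = (w_n)_{n∈ℤ} be a bounded sequence of scalars with inf_n |w_n| > 0. Consider the bilateral weighted backward shift B_w((x_n)) = (w_{n+1}x_{n+1}). If lim_{n→∞} sup_{k∈ℕ} |w_{-k}w_{-k-1}···w_{-k-n}|^{1/n} < 1 and lim_{n→∞} inf_{k∈ℕ} |w_k w_{k+1}···w_{k+n}|^{1/n} > 1, then B_w is generalized hyperbolic, with stable-type subspace M = {x : x_n = 0 for n > 0} and unstable-type subspace N = {x : x_n = 0 for n ≤ 0}. -/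
open Filter in

open Filter in
lemma wsgh_lemA (w : ℤ → ℂ) (C : ℝ) (hC : ∀ n, ‖w n‖ ≤ C)
    (L₁ : ℝ) (hL₁ : L₁ < 1)
    (h₁ : Tendsto (fun n : ℕ =>
        ⨆ k : ℕ, (∏ i ∈ Finset.range (n + 1), ‖w (-(k : ℤ) - (i : ℤ))‖) ^ ((n : ℝ)⁻¹))
      atTop (nhds L₁)) :
    ∃ s : ℕ, 1 ≤ s ∧ ∃ ε : ℝ, 0 ≤ ε ∧ ε < 1 ∧
      ∀ m : ℤ, m + s ≤ 0 → ∏ i ∈ Finset.range s, ‖w (m + 1 + i)‖ ≤ ε := by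
  have hL₁0 : 0 ≤ L₁ := by
    refine ge_of_tendsto' h₁ fun n => ?_
    exact Real.iSup_nonneg fun k =>
      Real.rpow_nonneg (Finset.prod_nonneg fun i _ => norm_nonneg _) _
  set c : ℝ := (1 + L₁) / 2 with hc
  have hc0 : 0 < c := by positivity
  have hc1 : c < 1 := by simp only [hc]; linarith
  have hLc : L₁ < c := by simp only [hc]; linarith
  obtain ⟨n, hlt, hn1⟩ := ((h₁.eventually (gt_mem_nhds hLc)).and (eventually_ge_atTop 1)).exists
  have hnR : (0 : ℝ) < n := by exact_mod_cast Nat.lt_of_lt_of_le Nat.zero_lt_one hn1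
  have prodnn : ∀ k : ℕ, 0 ≤ ∏ i ∈ Finset.range (n + 1), ‖w (-(k : ℤ) - (i : ℤ))‖ :=
    fun k => Finset.prod_nonneg fun i _ => norm_nonneg _
  have hbdd : BddAbove (Set.range fun k : ℕ =>
      (∏ i ∈ Finset.range (n + 1), ‖w (-(k : ℤ) - (i : ℤ))‖) ^ ((n : ℝ)⁻¹)) := by
    refine ⟨((C + 1) ^ (n + 1)) ^ ((n : ℝ)⁻¹), ?_⟩
    rintro _ ⟨k, rfl⟩
    refine Real.rpow_le_rpow (prodnn k) ?_ (inv_nonneg.2 hnR.le)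
    calc ∏ i ∈ Finset.range (n + 1), ‖w (-(k : ℤ) - (i : ℤ))‖
        ≤ ∏ _i ∈ Finset.range (n + 1), (C + 1) :=
          Finset.prod_le_prod (fun i _ => norm_nonneg _) (fun i _ => (hC _).trans (by linarith))
      _ = (C + 1) ^ (n + 1) := by rw [Finset.prod_const, Finset.card_range]
  have hkey : ∀ k : ℕ, ∏ i ∈ Finset.range (n + 1), ‖w (-(k : ℤ) - (i : ℤ))‖ ≤ c ^ n := by
    intro k
    have h1 : (∏ i ∈ Finset.range (n + 1), ‖w (-(k : ℤ) - (i : ℤ))‖) ^ ((n : ℝ)⁻¹) < c :=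
      lt_of_le_of_lt (le_ciSup hbdd k) hlt
    have h2 : ((∏ i ∈ Finset.range (n + 1), ‖w (-(k : ℤ) - (i : ℤ))‖) ^ ((n : ℝ)⁻¹)) ^ n
        ≤ c ^ n := pow_le_pow_left₀ (Real.rpow_nonneg (prodnn k) _) h1.le n
    calc ∏ i ∈ Finset.range (n + 1), ‖w (-(k : ℤ) - (i : ℤ))‖
        = ((∏ i ∈ Finset.range (n + 1), ‖w (-(k : ℤ) - (i : ℤ))‖) ^ ((n : ℝ)⁻¹)) ^ n := by
          rw [← Real.rpow_natCast ((∏ i ∈ Finset.range (n + 1),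
              ‖w (-(k : ℤ) - (i : ℤ))‖) ^ ((n : ℝ)⁻¹)) n,
            ← Real.rpow_mul (prodnn k), inv_mul_cancel₀ (ne_of_gt hnR), Real.rpow_one]
      _ ≤ c ^ n := h2
  refine ⟨n + 1, Nat.succ_le_succ (Nat.zero_le n), c ^ n, pow_nonneg hc0.le n,
    pow_lt_one₀ hc0.le hc1 (by omega), ?_⟩
  intro m hm
  push_cast at hm
  set k : ℕ := (-(m + (n : ℤ) + 1)).toNat with hkdef
  have hkz : (k : ℤ) = -(m + (n : ℤ) + 1) := Int.toNat_of_nonneg (by omega)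
  calc ∏ i ∈ Finset.range (n + 1), ‖w (m + 1 + i)‖
      = ∏ i ∈ Finset.range (n + 1), ‖w (-(k : ℤ) - ((n + 1 - 1 - i : ℕ) : ℤ))‖ := by
        refine Finset.prod_congr rfl fun i hi => ?_
        have hi' := Finset.mem_range.mp hi
        congr 2
        omega
    _ = ∏ i ∈ Finset.range (n + 1), ‖w (-(k : ℤ) - (i : ℤ))‖ :=
        Finset.prod_range_reflect (fun i => ‖w (-(k : ℤ) - (i : ℤ))‖) (n + 1)
    _ ≤ c ^ n := hkey k

open Filter in
lemma wsgh_lemB (w : ℤ → ℂ)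
    (L₂ : ℝ) (hL₂ : 1 < L₂)
    (h₂ : Tendsto (fun n : ℕ =>
        ⨅ k : ℕ, (∏ i ∈ Finset.range (n + 1), ‖w ((k : ℤ) + (i : ℤ))‖) ^ ((n : ℝ)⁻¹))
      atTop (nhds L₂)) :
    ∃ s : ℕ, 1 ≤ s ∧ ∃ ε : ℝ, 0 ≤ ε ∧ ε < 1 ∧
      ∀ m : ℤ, 1 ≤ m - s → (∏ i ∈ Finset.range s, ‖w (m - i)‖)⁻¹ ≤ ε := by
  set c : ℝ := (1 + L₂) / 2 with hc
  have hc1 : 1 < c := by simp only [hc]; linarith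
  have hc0 : 0 < c := lt_trans zero_lt_one hc1
  have hLc : c < L₂ := by simp only [hc]; linarith
  obtain ⟨n, hlt, hn1⟩ := ((h₂.eventually (lt_mem_nhds hLc)).and (eventually_ge_atTop 1)).exists
  have hnR : (0 : ℝ) < n := by exact_mod_cast Nat.lt_of_lt_of_le Nat.zero_lt_one hn1
  have prodnn : ∀ k : ℕ, 0 ≤ ∏ i ∈ Finset.range (n + 1), ‖w ((k : ℤ) + (i : ℤ))‖ :=
    fun k => Finset.prod_nonneg fun i _ => norm_nonneg _
  have hbdd : BddBelow (Set.range fun k : ℕ =>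
      (∏ i ∈ Finset.range (n + 1), ‖w ((k : ℤ) + (i : ℤ))‖) ^ ((n : ℝ)⁻¹)) := by
    refine ⟨0, ?_⟩
    rintro _ ⟨k, rfl⟩
    exact Real.rpow_nonneg (prodnn k) _
  have hkey : ∀ k : ℕ, c ^ n ≤ ∏ i ∈ Finset.range (n + 1), ‖w ((k : ℤ) + (i : ℤ))‖ := by
    intro k
    have h1 : c < (∏ i ∈ Finset.range (n + 1), ‖w ((k : ℤ) + (i : ℤ))‖) ^ ((n : ℝ)⁻¹) :=
      lt_of_lt_of_le hlt (ciInf_le hbdd k)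
    calc c ^ n ≤ ((∏ i ∈ Finset.range (n + 1), ‖w ((k : ℤ) + (i : ℤ))‖) ^ ((n : ℝ)⁻¹)) ^ n :=
          pow_le_pow_left₀ hc0.le h1.le n
      _ = ∏ i ∈ Finset.range (n + 1), ‖w ((k : ℤ) + (i : ℤ))‖ := by
          rw [← Real.rpow_natCast ((∏ i ∈ Finset.range (n + 1),
              ‖w ((k : ℤ) + (i : ℤ))‖) ^ ((n : ℝ)⁻¹)) n,
            ← Real.rpow_mul (prodnn k), inv_mul_cancel₀ (ne_of_gt hnR), Real.rpow_one]
  have hcn1 : 1 < c ^ n := one_lt_pow₀ hc1 (by omega)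
  refine ⟨n + 1, Nat.succ_le_succ (Nat.zero_le n), (c ^ n)⁻¹,
    inv_nonneg.2 (pow_nonneg hc0.le n), inv_lt_one_of_one_lt₀ hcn1, ?_⟩
  intro m hm
  push_cast at hm
  set k : ℕ := (m - (n : ℤ)).toNat with hkdef
  have hkz : (k : ℤ) = m - (n : ℤ) := Int.toNat_of_nonneg (by omega)
  have hk1 : c ^ n ≤ ∏ i ∈ Finset.range (n + 1), ‖w (m - i)‖ := by
    calc c ^ n ≤ ∏ i ∈ Finset.range (n + 1), ‖w ((k : ℤ) + (i : ℤ))‖ := hkey k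
      _ = ∏ i ∈ Finset.range (n + 1), ‖w (m - ((n + 1 - 1 - i : ℕ) : ℤ))‖ := by
          refine Finset.prod_congr rfl fun i hi => ?_
          have hi' := Finset.mem_range.mp hi
          congr 2
          omega
      _ = ∏ i ∈ Finset.range (n + 1), ‖w (m - (i : ℤ))‖ :=
          Finset.prod_range_reflect (fun i => ‖w (m - (i : ℤ))‖) (n + 1)
  exact inv_anti₀ (lt_trans zero_lt_one hcn1) hk1

lemma wsgh_coe_pow {E : Type*} [NormedAddCommGroup E] [NormedSpace ℂ E]
    (g : E →L[ℂ] E) (n : ℕ) :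
    ((g ^ n : E →L[ℂ] E) : E →ₗ[ℂ] E) = (g : E →ₗ[ℂ] E) ^ n :=
  map_pow (ContinuousLinearMap.toLinearMapRingHom : (E →L[ℂ] E) →+* (E →ₗ[ℂ] E)) g n

lemma wsgh_isUnit {E : Type*} [NormedAddCommGroup E] [NormedSpace ℂ E] [CompleteSpace E]
    (g : E →L[ℂ] E) (μ : ℂ) (h : ‖g‖ < ‖μ‖) :
    IsUnit (algebraMap ℂ (Module.End ℂ E) μ - (g : E →ₗ[ℂ] E)) := by
  have hμpos : 0 < ‖μ‖ := lt_of_le_of_lt (norm_nonneg g) h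
  have hμ : μ ≠ 0 := by simpa using hμpos.ne'
  have hlt : ‖μ⁻¹ • g‖ < 1 := by
    have h1 : ‖μ⁻¹ • g‖ = ‖μ⁻¹‖ * ‖g‖ := norm_smul μ⁻¹ g
    rw [h1, norm_inv, inv_mul_lt_iff₀ hμpos, mul_one]
    exact h
  set u : (E →L[ℂ] E)ˣ := Units.oneSub (μ⁻¹ • g) hlt with hu
  have huval : (u : E →L[ℂ] E) = 1 - μ⁻¹ • g := rfl
  have key : algebraMap ℂ (E →L[ℂ] E) μ - g = μ • (u : E →L[ℂ] E) := by
    rw [huval, smul_sub, smul_smul, mul_inv_cancel₀ hμ, one_smul,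
      Algebra.algebraMap_eq_smul_one]
  have hunit : IsUnit (algebraMap ℂ (E →L[ℂ] E) μ - g) := by
    rw [key, ← one_mul (u : E →L[ℂ] E), ← smul_mul_assoc]
    have h1 : IsUnit (μ • (1 : E →L[ℂ] E)) := by
      rw [← Algebra.algebraMap_eq_smul_one]
      exact (isUnit_iff_ne_zero.mpr hμ).map (algebraMap ℂ (E →L[ℂ] E))
    exact h1.mul u.isUnit
  obtain ⟨v, hv⟩ := hunit
  rw [Module.End.isUnit_iff]
  have hfun : (⇑(algebraMap ℂ (Module.End ℂ E) μ - (g : E →ₗ[ℂ] E)) : E → E)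
      = ⇑(v : E →L[ℂ] E) := by
    funext x
    rw [hv]
    rfl
  rw [hfun]
  exact Function.bijective_iff_has_inverse.mpr ⟨⇑(↑v⁻¹ : E →L[ℂ] E),
    fun x => by rw [← ContinuousLinearMap.mul_apply, v.inv_mul, ContinuousLinearMap.one_apply],
    fun x => by rw [← ContinuousLinearMap.mul_apply, v.mul_inv, ContinuousLinearMap.one_apply]⟩

lemma wsgh_spec {X : Type*} [NormedAddCommGroup X] [NormedSpace ℂ X] [CompleteSpace X]
    {M : Submodule ℂ X} (hMc : IsClosed (M : Set X)) (f : ↥M →L[ℂ] ↥M)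
    (s : ℕ) (hs : 1 ≤ s) (ε : ℝ) (hε0 : 0 ≤ ε) (hε1 : ε < 1)
    (hb : ∀ x : ↥M, ‖(f ^ s) x‖ ≤ ε * ‖x‖) :
    spectrum ℂ ((f : ↥M →ₗ[ℂ] ↥M)) ⊆ Metric.ball (0 : ℂ) 1 := by
  haveI : CompleteSpace ↥M := hMc.completeSpace_coe
  intro μ hμ
  rw [Metric.mem_ball, dist_zero_right]
  by_contra hcon
  push_neg at hcon
  have h1 : μ ^ s ∈ spectrum ℂ ((f : ↥M →ₗ[ℂ] ↥M) ^ s) :=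
    spectrum.pow_image_subset _ s ⟨μ, hμ, rfl⟩
  rw [← wsgh_coe_pow] at h1
  have h2 : ‖f ^ s‖ ≤ ε := ContinuousLinearMap.opNorm_le_bound _ hε0 hb
  have h3 : ‖f ^ s‖ < ‖μ ^ s‖ := by
    rw [norm_pow]
    have h4 : (1 : ℝ) ≤ ‖μ‖ ^ s := one_le_pow₀ hcon
    linarith [lt_of_le_of_lt h2 hε1]
  exact (spectrum.mem_iff.mp h1) (wsgh_isUnit (f ^ s) (μ ^ s) h3)

open ENNReal in
lemma wsgh_memℓp {p : ℝ≥0∞} [Fact (1 ≤ p)] (hp : p ≠ ⊤) {f g : ℤ → ℂ}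
    (hg : Memℓp g p) (h : ∀ n, ‖f n‖ ≤ ‖g n‖) : Memℓp f p := by
  have hp0 : p ≠ 0 := (lt_of_lt_of_le zero_lt_one (Fact.out : 1 ≤ p)).ne'
  have hq : 0 < p.toReal := ENNReal.toReal_pos hp0 hp
  rw [memℓp_gen_iff hq] at hg ⊢
  exact Summable.of_nonneg_of_le (fun n => Real.rpow_nonneg (norm_nonneg _) _)
    (fun n => Real.rpow_le_rpow (norm_nonneg _) (h n) hq.le) hg

open ENNReal in
lemma wsgh_lp_norm_le {p : ℝ≥0∞} [Fact (1 ≤ p)] (hp : p ≠ ⊤)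
    (y x : lp (fun _ : ℤ => ℂ) p) (ε : ℝ) (hε : 0 ≤ ε) (s : ℤ)
    (h : ∀ m : ℤ, ‖(y : ℤ → ℂ) m‖ ≤ ε * ‖(x : ℤ → ℂ) (m + s)‖) : ‖y‖ ≤ ε * ‖x‖ := by
  have hp0 : p ≠ 0 := (lt_of_lt_of_le zero_lt_one (Fact.out : 1 ≤ p)).ne'
  have hq : 0 < p.toReal := ENNReal.toReal_pos hp0 hp
  have hxs : Summable fun m : ℤ => ‖(x : ℤ → ℂ) m‖ ^ p.toReal := (lp.memℓp x).summable hq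
  have hxs' : Summable fun m : ℤ => ‖(x : ℤ → ℂ) (m + s)‖ ^ p.toReal :=
    ((Equiv.addRight s).summable_iff
      (f := fun m : ℤ => ‖(x : ℤ → ℂ) m‖ ^ p.toReal)).mpr hxs
  have hkey : ‖y‖ ^ p.toReal ≤ (ε * ‖x‖) ^ p.toReal := by
    rw [lp.norm_rpow_eq_tsum hq y]
    calc ∑' m : ℤ, ‖(y : ℤ → ℂ) m‖ ^ p.toReal
        ≤ ∑' m : ℤ, ε ^ p.toReal * ‖(x : ℤ → ℂ) (m + s)‖ ^ p.toReal := by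
          refine Summable.tsum_le_tsum (fun m => ?_) ((lp.memℓp y).summable hq) (hxs'.mul_left _)
          rw [← Real.mul_rpow hε (norm_nonneg _)]
          exact Real.rpow_le_rpow (norm_nonneg _) (h m) hq.le
      _ = ε ^ p.toReal * ∑' m : ℤ, ‖(x : ℤ → ℂ) (m + s)‖ ^ p.toReal := tsum_mul_left
      _ = ε ^ p.toReal * ∑' m : ℤ, ‖(x : ℤ → ℂ) m‖ ^ p.toReal := by
          congr 1
          exact (Equiv.addRight s).tsum_eq (fun m : ℤ => ‖(x : ℤ → ℂ) m‖ ^ p.toReal)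
      _ = ε ^ p.toReal * ‖x‖ ^ p.toReal := by rw [lp.norm_rpow_eq_tsum hq x]
      _ = (ε * ‖x‖) ^ p.toReal := (Real.mul_rpow hε (norm_nonneg _)).symm
  by_contra hcon
  push_neg at hcon
  exact absurd hkey (not_le.mpr
    (Real.rpow_lt_rpow (mul_nonneg hε (norm_nonneg _)) hcon hq))

lemma wsgh_c0_norm_le (y x : ZeroAtInftyContinuousMap ℤ ℂ) (ε : ℝ) (hε : 0 ≤ ε) (s : ℤ)
    (h : ∀ m : ℤ, ‖y m‖ ≤ ε * ‖x (m + s)‖) : ‖y‖ ≤ ε * ‖x‖ := by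
  rw [← ZeroAtInftyContinuousMap.norm_toBCF_eq_norm]
  refine (BoundedContinuousFunction.norm_le (mul_nonneg hε (norm_nonneg _))).mpr fun m => ?_
  refine le_trans (h m) (mul_le_mul_of_nonneg_left ?_ hε)
  rw [← ZeroAtInftyContinuousMap.norm_toBCF_eq_norm]
  exact BoundedContinuousFunction.norm_coe_le_norm x.toBCF (m + s)

lemma wsgh_c0_mk (x : ZeroAtInftyContinuousMap ℤ ℂ) (P : ℤ → Prop) [DecidablePred P] :
    ∃ y : ZeroAtInftyContinuousMap ℤ ℂ, ∀ n, y n = if P n then x n else 0 := by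
  refine ⟨⟨⟨fun n => if P n then x n else 0, continuous_of_discreteTopology⟩, ?_⟩, fun n => rfl⟩
  rw [tendsto_zero_iff_norm_tendsto_zero]
  refine squeeze_zero (fun n => norm_nonneg _) (fun n => ?_)
    (tendsto_zero_iff_norm_tendsto_zero.mp x.zero_at_infty')
  dsimp only
  split_ifs
  · exact le_refl _
  · rw [norm_zero]; exact norm_nonneg _

open ENNReal in
lemma wsgh_lp_eval_cont {p : ℝ≥0∞} [Fact (1 ≤ p)] (n : ℤ) :
    Continuous fun x : lp (fun _ : ℤ => ℂ) p => (x : ℤ → ℂ) n := by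
  have hp0 : p ≠ 0 := (lt_of_lt_of_le zero_lt_one (Fact.out : 1 ≤ p)).ne'
  refine (LipschitzWith.of_dist_le_mul (K := 1) fun x y => ?_).continuous
  simp only [NNReal.coe_one, one_mul]
  rw [dist_eq_norm, dist_eq_norm]
  have hsub : (x : ℤ → ℂ) n - (y : ℤ → ℂ) n = ((x - y : lp (fun _ : ℤ => ℂ) p) : ℤ → ℂ) n := by
    rw [lp.coeFn_sub]; rfl
  rw [hsub]
  exact lp.norm_apply_le_norm hp0 _ n

lemma wsgh_c0_eval_cont (n : ℤ) :
    Continuous fun x : ZeroAtInftyContinuousMap ℤ ℂ => x n := by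
  refine (LipschitzWith.of_dist_le_mul (K := 1) fun x y => ?_).continuous
  simp only [NNReal.coe_one, one_mul]
  have h1 : dist (x.toBCF n) (y.toBCF n) ≤ dist x.toBCF y.toBCF :=
    BoundedContinuousFunction.dist_coe_le_dist n
  rw [ZeroAtInftyContinuousMap.dist_toBCF_eq_dist] at h1
  exact h1
open Filter ENNReal ZeroAtInfty in
/-- If the weight sequence `w` is bounded, bounded away from zero,
and satisfies `lim_n sup_k |w_{-k}⋯w_{-k-n}|^{1/n} < 1` and
`lim_n inf_k |w_k⋯w_{k+n}|^{1/n} > 1`, then the bilateral weighted backward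
shift `B_w` on `ℓ_p(ℤ)` (`1 ≤ p < ∞`) and on `c₀(ℤ)` is generalized hyperbolic,
with `M = {x : x_n = 0 for n > 0}` and `N = {x : x_n = 0 for n ≤ 0}`. -/
theorem weighted_shift_generalizedHyperbolic
    (w : ℤ → ℂ) (hbd : ∃ C, ∀ n, ‖w n‖ ≤ C) (hbelow : ∃ m > 0, ∀ n, m ≤ ‖w n‖)
    (L₁ : ℝ) (hL₁ : L₁ < 1)
    (h₁ : Tendsto (fun n : ℕ =>
        ⨆ k : ℕ, (∏ i ∈ Finset.range (n + 1), ‖w (-(k : ℤ) - (i : ℤ))‖) ^ ((n : ℝ)⁻¹))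
      atTop (nhds L₁))
    (L₂ : ℝ) (hL₂ : 1 < L₂)
    (h₂ : Tendsto (fun n : ℕ =>
        ⨅ k : ℕ, (∏ i ∈ Finset.range (n + 1), ‖w ((k : ℤ) + (i : ℤ))‖) ^ ((n : ℝ)⁻¹))
      atTop (nhds L₂))
    (p : ℝ≥0∞) [Fact (1 ≤ p)] (hp : p ≠ ⊤) :
    (∀ T : lp (fun _ : ℤ => ℂ) p ≃L[ℂ] lp (fun _ : ℤ => ℂ) p,
      (∀ (x : lp (fun _ : ℤ => ℂ) p) (n : ℤ), (T x : ℤ → ℂ) n = w (n + 1) * (x : ℤ → ℂ) (n + 1)) →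
      ∃ M N : Submodule ℂ (lp (fun _ : ℤ => ℂ) p),
        (M : Set (lp (fun _ : ℤ => ℂ) p)) = {x : lp (fun _ : ℤ => ℂ) p | ∀ n : ℤ, 0 < n → (x : ℤ → ℂ) n = 0} ∧
        (N : Set (lp (fun _ : ℤ => ℂ) p)) = {x : lp (fun _ : ℤ => ℂ) p | ∀ n : ℤ, n ≤ 0 → (x : ℤ → ℂ) n = 0} ∧
        IsGeneralizedHyperbolic T M N) ∧
    (∀ T : C₀(ℤ, ℂ) ≃L[ℂ] C₀(ℤ, ℂ),
      (∀ (x : C₀(ℤ, ℂ)) (n : ℤ), (T x) n = w (n + 1) * x (n + 1)) →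
      ∃ M N : Submodule ℂ C₀(ℤ, ℂ),
        (M : Set C₀(ℤ, ℂ)) = {x : C₀(ℤ, ℂ) | ∀ n : ℤ, 0 < n → x n = 0} ∧
        (N : Set C₀(ℤ, ℂ)) = {x : C₀(ℤ, ℂ) | ∀ n : ℤ, n ≤ 0 → x n = 0} ∧
        IsGeneralizedHyperbolic T M N) := by
  obtain ⟨C, hC⟩ := hbd
  obtain ⟨mw, hmw0, hmw⟩ := hbelow
  have hwne : ∀ n, w n ≠ 0 := by
    intro n hn
    have := hmw n
    rw [hn, norm_zero] at this
    linarith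
  obtain ⟨s₁, hs₁, ε₁, hε₁0, hε₁1, hkey₁⟩ := wsgh_lemA w C hC L₁ hL₁ h₁
  obtain ⟨s₂, hs₂, ε₂, hε₂0, hε₂1, hkey₂⟩ := wsgh_lemB w L₂ hL₂ h₂
  constructor
  · -- ℓ^p case
    intro T hT
    set X := lp (fun _ : ℤ => ℂ) p with hX
    have hTsymm : ∀ (y : X) (n : ℤ), (T.symm y : ℤ → ℂ) n = (w n)⁻¹ * (y : ℤ → ℂ) (n - 1) := by
      intro y n
      have h0 := hT (T.symm y) (n - 1)
      rw [T.apply_symm_apply, sub_add_cancel] at h0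
      rw [eq_inv_mul_iff_mul_eq₀ (hwne n)]
      exact h0.symm
    let M : Submodule ℂ X :=
      { carrier := {x : X | ∀ n : ℤ, 0 < n → (x : ℤ → ℂ) n = 0}
        add_mem' := by
          intro a b ha hb n hn
          rw [lp.coeFn_add, Pi.add_apply, ha n hn, hb n hn, add_zero]
        zero_mem' := by
          intro n hn
          rw [lp.coeFn_zero, Pi.zero_apply]
        smul_mem' := by
          intro c a ha n hn
          rw [lp.coeFn_smul, Pi.smul_apply, ha n hn, smul_zero] }
    let N : Submodule ℂ X :=
      { carrier := {x : X | ∀ n : ℤ, n ≤ 0 → (x : ℤ → ℂ) n = 0}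
        add_mem' := by
          intro a b ha hb n hn
          rw [lp.coeFn_add, Pi.add_apply, ha n hn, hb n hn, add_zero]
        zero_mem' := by
          intro n hn
          rw [lp.coeFn_zero, Pi.zero_apply]
        smul_mem' := by
          intro c a ha n hn
          rw [lp.coeFn_smul, Pi.smul_apply, ha n hn, smul_zero] }
    have hMc : IsClosed ((M : Set X)) := by
      have h : (M : Set X) = ⋂ (n : ℤ), ⋂ (_ : 0 < n), {x : X | (x : ℤ → ℂ) n = 0} := by
        ext x
        simp only [Set.mem_iInter, Set.mem_setOf_eq]
        exact Iff.rfl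
      rw [h]
      exact isClosed_iInter fun n => isClosed_iInter fun _ =>
        isClosed_eq (wsgh_lp_eval_cont n) continuous_const
    have hNc : IsClosed ((N : Set X)) := by
      have h : (N : Set X) = ⋂ (n : ℤ), ⋂ (_ : n ≤ 0), {x : X | (x : ℤ → ℂ) n = 0} := by
        ext x
        simp only [Set.mem_iInter, Set.mem_setOf_eq]
        exact Iff.rfl
      rw [h]
      exact isClosed_iInter fun n => isClosed_iInter fun _ =>
        isClosed_eq (wsgh_lp_eval_cont n) continuous_const
    have hcompl : IsCompl M N := by
      constructor
      · rw [Submodule.disjoint_def]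
        intro x hxM hxN
        refine lp.ext (funext fun n => ?_)
        rw [lp.coeFn_zero, Pi.zero_apply]
        rcases le_or_gt n 0 with h | h
        · exact hxN n h
        · exact hxM n h
      · rw [codisjoint_iff, Submodule.eq_top_iff']
        intro x
        have hy : Memℓp (fun n : ℤ => if 0 < n then 0 else (x : ℤ → ℂ) n) p := by
          refine wsgh_memℓp hp (lp.memℓp x) (fun n => ?_)
          dsimp only
          split_ifs
          · rw [norm_zero]; exact norm_nonneg _
          · exact le_refl _
        have hz : Memℓp (fun n : ℤ => if 0 < n then (x : ℤ → ℂ) n else 0) p := by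
          refine wsgh_memℓp hp (lp.memℓp x) (fun n => ?_)
          dsimp only
          split_ifs
          · exact le_refl _
          · rw [norm_zero]; exact norm_nonneg _
        refine Submodule.mem_sup.mpr ⟨⟨_, hy⟩, ?_, ⟨_, hz⟩, ?_, ?_⟩
        · intro n hn
          show (if 0 < n then 0 else (x : ℤ → ℂ) n) = 0
          rw [if_pos hn]
        · intro n hn
          show (if 0 < n then (x : ℤ → ℂ) n else 0) = 0
          rw [if_neg (not_lt.mpr hn)]
        · refine lp.ext (funext fun n => ?_)
          rw [lp.coeFn_add, Pi.add_apply]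
          show (if 0 < n then 0 else (x : ℤ → ℂ) n) + (if 0 < n then (x : ℤ → ℂ) n else 0)
              = (x : ℤ → ℂ) n
          split_ifs <;> simp
    have hMinv : ∀ x ∈ M, T x ∈ M := by
      intro x hx n hn
      rw [hT x n, hx (n + 1) (by omega), mul_zero]
    have hNinv : ∀ x ∈ N, T.symm x ∈ N := by
      intro x hx n hn
      rw [hTsymm x n, hx (n - 1) (by omega), mul_zero]
    let fM : ↥M →L[ℂ] ↥M :=
      { toLinearMap := LinearMap.restrict ((T : X →L[ℂ] X) : X →ₗ[ℂ] X) hMinv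
        cont := Continuous.subtype_mk ((T.continuous).comp continuous_subtype_val) _ }
    let fN : ↥N →L[ℂ] ↥N :=
      { toLinearMap := LinearMap.restrict ((T.symm : X →L[ℂ] X) : X →ₗ[ℂ] X) hNinv
        cont := Continuous.subtype_mk ((T.symm.continuous).comp continuous_subtype_val) _ }
    have fM_coe : ∀ x : ↥M, ((fM x : X)) = T (x : X) := fun x => rfl
    have fN_coe : ∀ x : ↥N, ((fN x : X)) = T.symm (x : X) := fun x => rfl
    have fMpow : ∀ (j : ℕ) (x : ↥M) (m : ℤ),
        (((fM ^ j) x : X) : ℤ → ℂ) m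
          = (∏ i ∈ Finset.range j, w (m + 1 + i)) * ((x : X) : ℤ → ℂ) (m + j) := by
      intro j
      induction j with
      | zero =>
        intro x m
        rw [pow_zero, ContinuousLinearMap.one_apply, Finset.range_zero, Finset.prod_empty,
          one_mul, Nat.cast_zero, add_zero]
      | succ j ih =>
        intro x m
        rw [pow_succ, ContinuousLinearMap.mul_apply, ih (fM x) m]
        have h1 : ((fM x : X) : ℤ → ℂ) (m + j) = w (m + j + 1) * ((x : X) : ℤ → ℂ) (m + j + 1) := by
          rw [fM_coe x]
          exact hT (x : X) (m + j)
        rw [h1, Finset.prod_range_succ]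
        have e2 : m + (((j : ℕ) + 1 : ℕ) : ℤ) = m + (j : ℤ) + 1 := by push_cast; ring
        have e3 : m + 1 + (j : ℤ) = m + (j : ℤ) + 1 := by ring
        rw [e2, e3]
        ring
    have fNpow : ∀ (j : ℕ) (y : ↥N) (m : ℤ),
        (((fN ^ j) y : X) : ℤ → ℂ) m
          = (∏ i ∈ Finset.range j, (w (m - i))⁻¹) * ((y : X) : ℤ → ℂ) (m - j) := by
      intro j
      induction j with
      | zero =>
        intro y m
        rw [pow_zero, ContinuousLinearMap.one_apply, Finset.range_zero, Finset.prod_empty,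
          one_mul, Nat.cast_zero, sub_zero]
      | succ j ih =>
        intro y m
        rw [pow_succ, ContinuousLinearMap.mul_apply, ih (fN y) m]
        have h1 : ((fN y : X) : ℤ → ℂ) (m - j) = (w (m - j))⁻¹ * ((y : X) : ℤ → ℂ) (m - j - 1) := by
          rw [fN_coe y]
          exact hTsymm (y : X) (m - j)
        rw [h1, Finset.prod_range_succ]
        have e2 : m - (((j : ℕ) + 1 : ℕ) : ℤ) = m - (j : ℤ) - 1 := by push_cast; ring
        rw [e2]
        ring
    have hfM : ∀ x : ↥M, ‖(fM ^ s₁) x‖ ≤ ε₁ * ‖x‖ := by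
      intro x
      have hx : ∀ n : ℤ, 0 < n → ((x : X) : ℤ → ℂ) n = 0 := x.2
      have hcoord : ∀ m : ℤ, ‖(((fM ^ s₁) x : X) : ℤ → ℂ) m‖
          ≤ ε₁ * ‖((x : X) : ℤ → ℂ) (m + (s₁ : ℤ))‖ := by
        intro m
        rw [fMpow s₁ x m, norm_mul]
        rcases le_or_gt (m + (s₁ : ℤ)) 0 with hle | hlt
        · refine mul_le_mul_of_nonneg_right ?_ (norm_nonneg _)
          rw [norm_prod]
          exact hkey₁ m hle
        · rw [hx _ hlt, norm_zero, mul_zero, mul_zero]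
      exact wsgh_lp_norm_le hp _ _ ε₁ hε₁0 (s₁ : ℤ) hcoord
    have hfN : ∀ y : ↥N, ‖(fN ^ s₂) y‖ ≤ ε₂ * ‖y‖ := by
      intro y
      have hy : ∀ n : ℤ, n ≤ 0 → ((y : X) : ℤ → ℂ) n = 0 := y.2
      have hcoord : ∀ m : ℤ, ‖(((fN ^ s₂) y : X) : ℤ → ℂ) m‖
          ≤ ε₂ * ‖((y : X) : ℤ → ℂ) (m + -(s₂ : ℤ))‖ := by
        intro m
        have hms : m + -(s₂ : ℤ) = m - (s₂ : ℤ) := by ring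
        rw [hms, fNpow s₂ y m, norm_mul]
        rcases le_or_gt (m - (s₂ : ℤ)) 0 with hle | hlt
        · rw [hy _ hle, norm_zero, mul_zero, mul_zero]
        · refine mul_le_mul_of_nonneg_right ?_ (norm_nonneg _)
          rw [norm_prod]
          have hpi : ∏ i ∈ Finset.range s₂, ‖(w (m - i))⁻¹‖
              = (∏ i ∈ Finset.range s₂, ‖w (m - i)‖)⁻¹ := by
            rw [← Finset.prod_inv_distrib]
            exact Finset.prod_congr rfl fun i _ => norm_inv _
          rw [hpi]
          exact hkey₂ m (by omega)
      exact wsgh_lp_norm_le hp _ _ ε₂ hε₂0 (-(s₂ : ℤ)) hcoord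
    have hspecM := wsgh_spec hMc fM s₁ hs₁ ε₁ hε₁0 hε₁1 hfM
    have hspecN := wsgh_spec hNc fN s₂ hs₂ ε₂ hε₂0 hε₂1 hfN
    exact ⟨M, N, rfl, rfl, hMc, hNc, hcompl, ⟨hMinv, hspecM⟩, ⟨hNinv, hspecN⟩⟩
  · -- c₀ case
    intro T hT
    set X := C₀(ℤ, ℂ) with hX
    have hTsymm : ∀ (y : X) (n : ℤ), (T.symm y) n = (w n)⁻¹ * y (n - 1) := by
      intro y n
      have h0 := hT (T.symm y) (n - 1)
      rw [T.apply_symm_apply, sub_add_cancel] at h0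
      rw [eq_inv_mul_iff_mul_eq₀ (hwne n)]
      exact h0.symm
    let M : Submodule ℂ X :=
      { carrier := {x : X | ∀ n : ℤ, 0 < n → x n = 0}
        add_mem' := by
          intro a b ha hb n hn
          show a n + b n = 0
          rw [ha n hn, hb n hn, add_zero]
        zero_mem' := by
          intro n hn
          rfl
        smul_mem' := by
          intro c a ha n hn
          show c * a n = 0
          rw [ha n hn, mul_zero] }
    let N : Submodule ℂ X :=
      { carrier := {x : X | ∀ n : ℤ, n ≤ 0 → x n = 0}
        add_mem' := by
          intro a b ha hb n hn
          show a n + b n = 0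
          rw [ha n hn, hb n hn, add_zero]
        zero_mem' := by
          intro n hn
          rfl
        smul_mem' := by
          intro c a ha n hn
          show c * a n = 0
          rw [ha n hn, mul_zero] }
    have hMc : IsClosed ((M : Set X)) := by
      have h : (M : Set X) = ⋂ (n : ℤ), ⋂ (_ : 0 < n), {x : X | x n = 0} := by
        ext x
        simp only [Set.mem_iInter, Set.mem_setOf_eq]
        exact Iff.rfl
      rw [h]
      exact isClosed_iInter fun n => isClosed_iInter fun _ =>
        isClosed_eq (wsgh_c0_eval_cont n) continuous_const
    have hNc : IsClosed ((N : Set X)) := by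
      have h : (N : Set X) = ⋂ (n : ℤ), ⋂ (_ : n ≤ 0), {x : X | x n = 0} := by
        ext x
        simp only [Set.mem_iInter, Set.mem_setOf_eq]
        exact Iff.rfl
      rw [h]
      exact isClosed_iInter fun n => isClosed_iInter fun _ =>
        isClosed_eq (wsgh_c0_eval_cont n) continuous_const
    have hcompl : IsCompl M N := by
      constructor
      · rw [Submodule.disjoint_def]
        intro x hxM hxN
        refine ZeroAtInftyContinuousMap.ext fun n => ?_
        show x n = (0 : X) n
        rcases le_or_gt n 0 with h | h
        · rw [hxN n h]; rfl
        · rw [hxM n h]; rfl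
      · rw [codisjoint_iff, Submodule.eq_top_iff']
        intro x
        obtain ⟨y, hy⟩ := wsgh_c0_mk x (fun n => ¬ 0 < n)
        obtain ⟨z, hz⟩ := wsgh_c0_mk x (fun n => 0 < n)
        refine Submodule.mem_sup.mpr ⟨y, ?_, z, ?_, ?_⟩
        · intro n hn
          rw [hy n, if_neg (not_not_intro hn)]
        · intro n hn
          rw [hz n, if_neg (not_lt.mpr hn)]
        · refine ZeroAtInftyContinuousMap.ext fun n => ?_
          show y n + z n = x n
          rw [hy n, hz n]
          by_cases h : 0 < n
          · rw [if_neg (not_not_intro h), if_pos h, zero_add]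
          · rw [if_pos h, if_neg h, add_zero]
    have hMinv : ∀ x ∈ M, T x ∈ M := by
      intro x hx n hn
      rw [hT x n, hx (n + 1) (by omega), mul_zero]
    have hNinv : ∀ x ∈ N, T.symm x ∈ N := by
      intro x hx n hn
      rw [hTsymm x n, hx (n - 1) (by omega), mul_zero]
    let fM : ↥M →L[ℂ] ↥M :=
      { toLinearMap := LinearMap.restrict ((T : X →L[ℂ] X) : X →ₗ[ℂ] X) hMinv
        cont := Continuous.subtype_mk ((T.continuous).comp continuous_subtype_val) _ }
    let fN : ↥N →L[ℂ] ↥N :=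
      { toLinearMap := LinearMap.restrict ((T.symm : X →L[ℂ] X) : X →ₗ[ℂ] X) hNinv
        cont := Continuous.subtype_mk ((T.symm.continuous).comp continuous_subtype_val) _ }
    have fM_coe : ∀ x : ↥M, ((fM x : X)) = T (x : X) := fun x => rfl
    have fN_coe : ∀ x : ↥N, ((fN x : X)) = T.symm (x : X) := fun x => rfl
    have fMpow : ∀ (j : ℕ) (x : ↥M) (m : ℤ),
        ((fM ^ j) x : X) m
          = (∏ i ∈ Finset.range j, w (m + 1 + i)) * (x : X) (m + j) := by
      intro j
      induction j with
      | zero =>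
        intro x m
        rw [pow_zero, ContinuousLinearMap.one_apply, Finset.range_zero, Finset.prod_empty,
          one_mul, Nat.cast_zero, add_zero]
      | succ j ih =>
        intro x m
        rw [pow_succ, ContinuousLinearMap.mul_apply, ih (fM x) m]
        have h1 : (fM x : X) (m + j) = w (m + j + 1) * (x : X) (m + j + 1) := by
          rw [fM_coe x]
          exact hT (x : X) (m + j)
        rw [h1, Finset.prod_range_succ]
        have e2 : m + (((j : ℕ) + 1 : ℕ) : ℤ) = m + (j : ℤ) + 1 := by push_cast; ring
        have e3 : m + 1 + (j : ℤ) = m + (j : ℤ) + 1 := by ring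
        rw [e2, e3]
        ring
    have fNpow : ∀ (j : ℕ) (y : ↥N) (m : ℤ),
        ((fN ^ j) y : X) m
          = (∏ i ∈ Finset.range j, (w (m - i))⁻¹) * (y : X) (m - j) := by
      intro j
      induction j with
      | zero =>
        intro y m
        rw [pow_zero, ContinuousLinearMap.one_apply, Finset.range_zero, Finset.prod_empty,
          one_mul, Nat.cast_zero, sub_zero]
      | succ j ih =>
        intro y m
        rw [pow_succ, ContinuousLinearMap.mul_apply, ih (fN y) m]
        have h1 : (fN y : X) (m - j) = (w (m - j))⁻¹ * (y : X) (m - j - 1) := by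
          rw [fN_coe y]
          exact hTsymm (y : X) (m - j)
        rw [h1, Finset.prod_range_succ]
        have e2 : m - (((j : ℕ) + 1 : ℕ) : ℤ) = m - (j : ℤ) - 1 := by push_cast; ring
        rw [e2]
        ring
    have hfM : ∀ x : ↥M, ‖(fM ^ s₁) x‖ ≤ ε₁ * ‖x‖ := by
      intro x
      have hx : ∀ n : ℤ, 0 < n → (x : X) n = 0 := x.2
      have hcoord : ∀ m : ℤ, ‖((fM ^ s₁) x : X) m‖
          ≤ ε₁ * ‖(x : X) (m + (s₁ : ℤ))‖ := by
        intro m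
        rw [fMpow s₁ x m, norm_mul]
        rcases le_or_gt (m + (s₁ : ℤ)) 0 with hle | hlt
        · refine mul_le_mul_of_nonneg_right ?_ (norm_nonneg _)
          rw [norm_prod]
          exact hkey₁ m hle
        · rw [hx _ hlt, norm_zero, mul_zero, mul_zero]
      exact wsgh_c0_norm_le _ _ ε₁ hε₁0 (s₁ : ℤ) hcoord
    have hfN : ∀ y : ↥N, ‖(fN ^ s₂) y‖ ≤ ε₂ * ‖y‖ := by
      intro y
      have hy : ∀ n : ℤ, n ≤ 0 → (y : X) n = 0 := y.2
      have hcoord : ∀ m : ℤ, ‖((fN ^ s₂) y : X) m‖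
          ≤ ε₂ * ‖(y : X) (m + -(s₂ : ℤ))‖ := by
        intro m
        have hms : m + -(s₂ : ℤ) = m - (s₂ : ℤ) := by ring
        rw [hms, fNpow s₂ y m, norm_mul]
        rcases le_or_gt (m - (s₂ : ℤ)) 0 with hle | hlt
        · rw [hy _ hle, norm_zero, mul_zero, mul_zero]
        · refine mul_le_mul_of_nonneg_right ?_ (norm_nonneg _)
          rw [norm_prod]
          have hpi : ∏ i ∈ Finset.range s₂, ‖(w (m - i))⁻¹‖
              = (∏ i ∈ Finset.range s₂, ‖w (m - i)‖)⁻¹ := by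
            rw [← Finset.prod_inv_distrib]
            exact Finset.prod_congr rfl fun i _ => norm_inv _
          rw [hpi]
          exact hkey₂ m (by omega)
      exact wsgh_c0_norm_le _ _ ε₂ hε₂0 (-(s₂ : ℤ)) hcoord
    have hspecM := wsgh_spec hMc fM s₁ hs₁ ε₁ hε₁0 hε₁1 hfM
    have hspecN := wsgh_spec hNc fN s₂ hs₂ ε₂ hε₂0 hε₂1 hfN
    exact ⟨M, N, rfl, rfl, hMc, hNc, hcompl, ⟨hMinv, hspecM⟩, ⟨hNinv, hspecN⟩⟩
end

section
/- Let T be an invertible bounded linear operator with ‖Tᵏy‖ ≤ c tᵏ‖y‖ for y ∈ M and ‖T^{-k}z‖ ≤ c tᵏ‖z‖ for z ∈ N (c ≥ 1, 0 < t < 1), let X = M ⊕ N with projections P_M, P_N and d = max(‖P_M‖,‖P_N‖), and let Y = M + T⁻¹(N). Fix 0 < γ < 1 and set ε = γ(1−t)/(c d (1+t)). Then for any Lipschitz β ∈ U_b(X) with ‖β‖_∞ ≤ ε and Lip(β) ≤ ε, the map Φ : U_b(X;Y) → U_b(X;Y), Φ(φ) = Ψ⁻¹(β ∘ (I + φ)),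 is a contraction with Lipschitz constant at most c d (1+t)ε/(1−t) < 1, where Ψ(φ) = φ ∘ T − T ∘ φ; hence Φ has a unique fixed point h, and ‖h‖_∞ ≤ γ. -/
/-!
Write `ψ = PM ψ + PN ψ`. For a solution of `ψ ∘ T - T ∘ ψ = α` with values in `Y = M + T⁻¹(N)` the
projections commute with `T`, so `PM ψ (x) = T (PM ψ (T⁻¹ x)) + PM α (T⁻¹ x)` can be unrolled
backwards along the orbit of `x` and `PN ψ (x) = T⁻¹ (PN ψ (T x) - PN α (x))` forwards. Because `T`
contracts on `M` and `T⁻¹` on `N`, both unrollings converge geometrically: they give the explicit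
solution `Ψ⁻¹ α` and the a priori bound `‖ψ‖_∞ ≤ c d (1+t)/(1-t) ‖α‖_∞` for every bounded
solution. Since `β` is `ε`-Lipschitz, `Φ` is therefore a contraction of the complete space of
bounded uniformly continuous functions, and Banach's fixed point theorem gives `h`; the a priori
bound with `‖β‖_∞ ≤ ε` gives `‖h‖_∞ ≤ γ`.
-/

open Filter Topology BoundedContinuousFunction

theorem uniformContinuous_tsum {α β F : Type*} [UniformSpace β] [NormedAddCommGroup F]
    [CompleteSpace F] {f : α → β → F} {u : α → ℝ} (hf : ∀ i, UniformContinuous (f i))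
    (hu : Summable u) (hfu : ∀ i x, ‖f i x‖ ≤ u i) :
    UniformContinuous fun x => ∑' i, f i x := by
  refine (tendstoUniformly_tsum hu hfu).uniformContinuous (Frequently.of_forall fun s => ?_)
  rw [← Finset.sum_fn]
  exact Finset.sum_induction _ UniformContinuous (fun _ _ => UniformContinuous.add)
    uniformContinuous_const fun i _ => hf i

theorem BoundedContinuousFunction.isClosed_setOf_uniformContinuous {α β : Type*}
    [UniformSpace α] [PseudoMetricSpace β] : IsClosed {f : α →ᵇ β | UniformContinuous f} :=
  isClosed_iff_frequently.mpr fun _ hf =>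
    (tendsto_iff_tendstoUniformly.mp tendsto_id).uniformContinuous hf

section Recursion

variable {E : Type*} [NormedAddCommGroup E] [NormedSpace ℝ E]

theorem ContinuousLinearEquiv.pow_succ_apply (A : E ≃L[ℝ] E) (n : ℕ) (x : E) :
    (A ^ (n + 1)) x = (A ^ n) (A x) := by
  rw [pow_succ]; rfl

theorem ContinuousLinearEquiv.pow_succ_apply' (A : E ≃L[ℝ] E) (n : ℕ) (x : E) :
    (A ^ (n + 1)) x = A ((A ^ n) x) := by
  rw [pow_succ']; rfl

theorem eq_pow_apply_add_sum_of_forall_eq {A : E ≃L[ℝ] E} {u v : ℕ → E}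
    (h : ∀ n, u n = A (u (n + 1)) + v n) (n : ℕ) :
    u 0 = (A ^ n) (u n) + ∑ k ∈ Finset.range n, (A ^ k) (v k) := by
  induction n with
  | zero => rw [Finset.sum_range_zero, add_zero]; rfl
  | succ n ih =>
    rw [ih, h n, map_add, ← A.pow_succ_apply, Finset.sum_range_succ]
    abel

theorem le_of_forall_le_mul_pow_add {a b C t : ℝ} (ht0 : 0 ≤ t) (ht1 : t < 1)
    (h : ∀ n : ℕ, a ≤ C * t ^ n + b) : a ≤ b := by
  have hlim : Tendsto (fun n : ℕ => C * t ^ n + b) atTop (𝓝 b) := by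
    simpa using ((tendsto_pow_atTop_nhds_zero_of_lt_one ht0 ht1).const_mul C).add_const b
  exact ge_of_tendsto' hlim h

theorem norm_le_of_forall_eq_map_add {A : E ≃L[ℝ] E} {u v : ℕ → E} {C L t : ℝ} (ht0 : 0 ≤ t)
    (ht1 : t < 1) (h : ∀ n, u n = A (u (n + 1)) + v n) (hu : ∀ n, ‖(A ^ n) (u n)‖ ≤ C * t ^ n)
    (hv : ∀ n, ‖(A ^ n) (v n)‖ ≤ L * t ^ n) : ‖u 0‖ ≤ L / (1 - t) := by
  have hL : 0 ≤ L := by simpa using (norm_nonneg _).trans (hv 0)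
  refine le_of_forall_le_mul_pow_add (C := C) ht0 ht1 fun n => ?_
  calc ‖u 0‖ ≤ ‖(A ^ n) (u n)‖ + ∑ k ∈ Finset.range n, ‖(A ^ k) (v k)‖ := by
        rw [eq_pow_apply_add_sum_of_forall_eq h n]
        exact (norm_add_le _ _).trans (by gcongr; exact norm_sum_le _ _)
    _ ≤ C * t ^ n + ∑ k ∈ Finset.range n, L * t ^ k :=
        add_le_add (hu n) (Finset.sum_le_sum fun k _ => hv k)
    _ ≤ C * t ^ n + L / (1 - t) := by
        rw [← Finset.mul_sum, div_eq_mul_one_div]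
        gcongr
        simpa using geom_sum_Ico_le_of_lt_one (m := 0) (n := n) ht0 ht1

end Recursion

section Dichotomy

variable {X : Type*} [NormedAddCommGroup X] [NormedSpace ℝ X] {T : X ≃L[ℝ] X}
  {M N : Submodule ℝ X} {PM PN : X →L[ℝ] X} {c t d : ℝ}

theorem proj_add_of_mem (hMN : Disjoint M N) (hPM : ∀ x, PM x ∈ M) (hPN : ∀ x, PN x ∈ N)
    (hP : ∀ x, PM x + PN x = x) {m n : X} (hm : m ∈ M) (hn : n ∈ N) :
    PM (m + n) = m ∧ PN (m + n) = n := by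
  have hdiff : PM (m + n) - m = n - PN (m + n) := by
    rw [sub_eq_sub_iff_add_eq_add, hP, add_comm]
  have hzero : PM (m + n) - m = 0 :=
    Submodule.disjoint_def.mp hMN _ (M.sub_mem (hPM _) hm) (hdiff ▸ N.sub_mem hn (hPN _))
  rw [hzero, eq_comm, sub_eq_zero] at hdiff
  exact ⟨sub_eq_zero.mp hzero, hdiff.symm⟩

theorem proj_map_of_mem_sup_comap (hMN : Disjoint M N) (hPM : ∀ x, PM x ∈ M)
    (hPN : ∀ x, PN x ∈ N) (hP : ∀ x, PM x + PN x = x) (hTM : ∀ x ∈ M, T x ∈ M)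
    (hTN : ∀ x ∈ N, T.symm x ∈ N) {y : X}
    (hy : y ∈ M ⊔ N.comap ((T : X →L[ℝ] X) : X →ₗ[ℝ] X)) :
    PM (T y) = T (PM y) ∧ PN (T y) = T (PN y) := by
  obtain ⟨m, hm, w, hw, rfl⟩ := Submodule.mem_sup.mp hy
  have hTw : T w ∈ N := hw
  have hwN : w ∈ N := by simpa using hTN _ hTw
  obtain ⟨hPMy, hPNy⟩ := proj_add_of_mem hMN hPM hPN hP hm hwN
  obtain ⟨hPMTy, hPNTy⟩ := proj_add_of_mem hMN hPM hPN hP (hTM m hm) hTw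
  rw [map_add T, hPMy, hPNy, hPMTy, hPNTy]
  exact ⟨rfl, rfl⟩

/-- `ψ ∈ U_b(X;Y)` and `Ψ ψ = α`, where `Ψ ψ = ψ ∘ T - T ∘ ψ`. -/
def IsUbSolution (T : X ≃L[ℝ] X) (Y : Submodule ℝ X) (α ψ : X → X) : Prop :=
  UniformContinuous ψ ∧ (∃ C, ∀ x, ‖ψ x‖ ≤ C) ∧ (∀ x, ψ x ∈ Y) ∧ ∀ x, ψ (T x) - T (ψ x) = α x

structure IsExpDichotomy (T : X ≃L[ℝ] X) (M N : Submodule ℝ X) (PM PN : X →L[ℝ] X)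
    (c t d : ℝ) : Prop where
  projM_mem : ∀ x, PM x ∈ M
  projN_mem : ∀ x, PN x ∈ N
  projM_add_projN : ∀ x, PM x + PN x = x
  mapsTo_M : ∀ x ∈ M, T x ∈ M
  symm_mapsTo_N : ∀ x ∈ N, T.symm x ∈ N
  c_nonneg : 0 ≤ c
  t_nonneg : 0 ≤ t
  t_lt_one : t < 1
  norm_pow_M : ∀ (n : ℕ), ∀ y ∈ M, ‖(T ^ n) y‖ ≤ c * t ^ n * ‖y‖
  norm_symm_pow_N : ∀ (n : ℕ), ∀ z ∈ N, ‖(T.symm ^ n) z‖ ≤ c * t ^ n * ‖z‖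
  norm_projM_le : ‖PM‖ ≤ d
  norm_projN_le : ‖PN‖ ≤ d

namespace IsExpDichotomy

theorem d_nonneg (hT : IsExpDichotomy T M N PM PN c t d) : 0 ≤ d :=
  (norm_nonneg _).trans hT.norm_projM_le

theorem pow_mem_M (hT : IsExpDichotomy T M N PM PN c t d) (n : ℕ) {y : X} (hy : y ∈ M) :
    (T ^ n) y ∈ M := by
  induction n with
  | zero => exact hy
  | succ n ih => rw [T.pow_succ_apply']; exact hT.mapsTo_M _ ih

theorem symm_pow_mem_N (hT : IsExpDichotomy T M N PM PN c t d) (n : ℕ) {z : X} (hz : z ∈ N) :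
    (T.symm ^ n) z ∈ N := by
  induction n with
  | zero => exact hz
  | succ n ih => rw [T.symm.pow_succ_apply']; exact hT.symm_mapsTo_N _ ih

theorem norm_pow_projM_le (hT : IsExpDichotomy T M N PM PN c t d) (n : ℕ) (x : X) :
    ‖(T ^ n) (PM x)‖ ≤ c * d * ‖x‖ * t ^ n := by
  have := hT.c_nonneg
  have := hT.t_nonneg
  calc ‖(T ^ n) (PM x)‖ ≤ c * t ^ n * ‖PM x‖ := hT.norm_pow_M n _ (hT.projM_mem x)
    _ ≤ c * t ^ n * (d * ‖x‖) := by gcongr; exact PM.le_of_opNorm_le hT.norm_projM_le x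
    _ = c * d * ‖x‖ * t ^ n := by ring

theorem norm_symm_pow_projN_le (hT : IsExpDichotomy T M N PM PN c t d) (n : ℕ) (x : X) :
    ‖(T.symm ^ n) (PN x)‖ ≤ c * d * ‖x‖ * t ^ n := by
  have := hT.c_nonneg
  have := hT.t_nonneg
  calc ‖(T.symm ^ n) (PN x)‖ ≤ c * t ^ n * ‖PN x‖ := hT.norm_symm_pow_N n _ (hT.projN_mem x)
    _ ≤ c * t ^ n * (d * ‖x‖) := by gcongr; exact PN.le_of_opNorm_le hT.norm_projN_le x
    _ = c * d * ‖x‖ * t ^ n := by ring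

theorem norm_le_of_homological_eq (hT : IsExpDichotomy T M N PM PN c t d) (hMN : Disjoint M N)
    {ψ α : X → X} {K : ℝ} (hψY : ∀ x, ψ x ∈ M ⊔ N.comap ((T : X →L[ℝ] X) : X →ₗ[ℝ] X))
    (hψB : ∃ B, ∀ x, ‖ψ x‖ ≤ B) (hψ : ∀ x, ψ (T x) - T (ψ x) = α x) (hαK : ∀ x, ‖α x‖ ≤ K)
    (x : X) : ‖ψ x‖ ≤ c * d * (1 + t) * K / (1 - t) := by
  obtain ⟨B, hB⟩ := hψB
  have hcomm z := proj_map_of_mem_sup_comap hMN hT.projM_mem hT.projN_mem hT.projM_add_projN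
    hT.mapsTo_M hT.symm_mapsTo_N (hψY z)
  have hψT z : ψ (T z) = T (ψ z) + α z := by rw [← hψ z, add_sub_cancel]
  have := hT.t_nonneg
  have hcd : 0 ≤ c * d := mul_nonneg hT.c_nonneg hT.d_nonneg
  have hMpart : ‖PM (ψ x)‖ ≤ c * d * K / (1 - t) := by
    refine norm_le_of_forall_eq_map_add (A := T) (u := fun n => PM (ψ ((T.symm ^ n) x)))
      (v := fun n => PM (α ((T.symm ^ (n + 1)) x))) (C := c * d * B) hT.t_nonneg hT.t_lt_one
      (fun n => ?_) (fun n => ?_) (fun n => ?_)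
    · rw [← (hcomm _).1, ← map_add, ← hψT, T.symm.pow_succ_apply', T.apply_symm_apply]
    · exact (hT.norm_pow_projM_le n _).trans (by gcongr; exact hB _)
    · exact (hT.norm_pow_projM_le n _).trans (by gcongr; exact hαK _)
  have hNpart : ‖PN (ψ x)‖ ≤ c * d * K * t / (1 - t) := by
    refine norm_le_of_forall_eq_map_add (A := T.symm) (u := fun n => PN (ψ ((T ^ n) x)))
      (v := fun n => T.symm (-PN (α ((T ^ n) x)))) (C := c * d * B) hT.t_nonneg hT.t_lt_one
      (fun n => ?_) (fun n => ?_) (fun n => ?_)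
    · rw [T.pow_succ_apply', hψT, map_add PN, (hcomm _).2, ← map_add, add_neg_cancel_right,
        T.symm_apply_apply]
    · exact (hT.norm_symm_pow_projN_le n _).trans (by gcongr; exact hB _)
    · rw [← T.symm.pow_succ_apply, map_neg, norm_neg]
      calc _ ≤ c * d * ‖α ((T ^ n) x)‖ * t ^ (n + 1) := hT.norm_symm_pow_projN_le _ _
        _ ≤ c * d * K * t ^ (n + 1) := by gcongr; exact hαK _
        _ = c * d * K * t * t ^ n := by ring
  calc ‖ψ x‖ = ‖PM (ψ x) + PN (ψ x)‖ := by rw [hT.projM_add_projN]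
    _ ≤ c * d * K / (1 - t) + c * d * K * t / (1 - t) :=
        (norm_add_le _ _).trans (add_le_add hMpart hNpart)
    _ = c * d * (1 + t) * K / (1 - t) := by ring

theorem norm_sub_le_of_homological_eq_comp (hT : IsExpDichotomy T M N PM PN c t d)
    (hMN : Disjoint M N) {β φ₁ φ₂ ψ₁ ψ₂ : X → X} {ε C : ℝ} (hε : 0 ≤ ε)
    (hβ : ∀ x y, ‖β x - β y‖ ≤ ε * ‖x - y‖)
    (hY₁ : ∀ x, ψ₁ x ∈ M ⊔ N.comap ((T : X →L[ℝ] X) : X →ₗ[ℝ] X))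
    (hY₂ : ∀ x, ψ₂ x ∈ M ⊔ N.comap ((T : X →L[ℝ] X) : X →ₗ[ℝ] X))
    (hB₁ : ∃ B, ∀ x, ‖ψ₁ x‖ ≤ B) (hB₂ : ∃ B, ∀ x, ‖ψ₂ x‖ ≤ B)
    (h₁ : ∀ x, ψ₁ (T x) - T (ψ₁ x) = β (x + φ₁ x))
    (h₂ : ∀ x, ψ₂ (T x) - T (ψ₂ x) = β (x + φ₂ x)) (hC : ∀ x, ‖φ₁ x - φ₂ x‖ ≤ C) (x : X) :
    ‖ψ₁ x - ψ₂ x‖ ≤ c * d * (1 + t) * ε / (1 - t) * C := by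
  obtain ⟨B₁, hB₁⟩ := hB₁
  obtain ⟨B₂, hB₂⟩ := hB₂
  have hβφ z : ‖β (z + φ₁ z) - β (z + φ₂ z)‖ ≤ ε * C :=
    (hβ _ _).trans (by rw [add_sub_add_left_eq_sub]; gcongr; exact hC z)
  calc ‖ψ₁ x - ψ₂ x‖ ≤ c * d * (1 + t) * (ε * C) / (1 - t) :=
        hT.norm_le_of_homological_eq hMN (fun z => sub_mem (hY₁ z) (hY₂ z))
          ⟨B₁ + B₂, fun z => norm_sub_le_of_le (hB₁ z) (hB₂ z)⟩
          (fun z => by rw [map_sub, sub_sub_sub_comm, h₁, h₂]) hβφ x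
    _ = c * d * (1 + t) * ε / (1 - t) * C := by ring


theorem exists_isUbSolution [CompleteSpace X] (hT : IsExpDichotomy T M N PM PN c t d)
    (hMc : IsClosed (M : Set X)) (hNc : IsClosed (N : Set X)) {α : X → X} {K : ℝ}
    (hα : UniformContinuous α) (hαK : ∀ x, ‖α x‖ ≤ K) :
    ∃ ψ, IsUbSolution T (M ⊔ N.comap ((T : X →L[ℝ] X) : X →ₗ[ℝ] X)) α ψ := by
  -- the recursions unrolled in `norm_le_of_homological_eq`, summed to infinity
  set f : ℕ → X → X := fun k x => (T ^ k) (PM (α ((T.symm ^ (k + 1)) x))) with hf_def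
  set g : ℕ → X → X := fun k x => (T.symm ^ k) (PN (α ((T ^ k) x))) with hg_def
  have := hT.t_nonneg
  have hcd : 0 ≤ c * d := mul_nonneg hT.c_nonneg hT.d_nonneg
  have hgeom : Summable fun k : ℕ => c * d * K * t ^ k :=
    (summable_geometric_of_lt_one hT.t_nonneg hT.t_lt_one).mul_left _
  have hf k x : ‖f k x‖ ≤ c * d * K * t ^ k :=
    (hT.norm_pow_projM_le k _).trans (by gcongr; exact hαK _)
  have hg k x : ‖g k x‖ ≤ c * d * K * t ^ k :=
    (hT.norm_symm_pow_projN_le k _).trans (by gcongr; exact hαK _)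
  have hfs x : Summable (f · x) := hgeom.of_norm_bounded (hf · x)
  have hgs x : Summable (g · x) := hgeom.of_norm_bounded (hg · x)
  have hF x : ∑' k, f k (T x) = PM (α x) + T (∑' k, f k x) := by
    rw [(hfs (T x)).tsum_eq_zero_add, T.map_tsum]
    congr 1
    · simp only [hf_def, T.symm.pow_succ_apply, T.symm_apply_apply]; rfl
    · refine tsum_congr fun k => ?_
      simp only [hf_def]
      rw [T.symm.pow_succ_apply, T.symm_apply_apply, T.pow_succ_apply']
  have hG x : ∑' k, g k x = PN (α x) + T.symm (∑' k, g k (T x)) := by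
    rw [(hgs x).tsum_eq_zero_add, T.symm.map_tsum]
    congr 1
    refine tsum_congr fun k => ?_
    simp only [hg_def]
    rw [T.symm.pow_succ_apply', T.pow_succ_apply]
  have hfuc k : UniformContinuous (f k) :=
    ((T ^ k : X ≃L[ℝ] X) : X →L[ℝ] X).uniformContinuous.comp <| PM.uniformContinuous.comp <|
      hα.comp ((T.symm ^ (k + 1) : X ≃L[ℝ] X) : X →L[ℝ] X).uniformContinuous
  have hguc k : UniformContinuous (g k) :=
    ((T.symm ^ k : X ≃L[ℝ] X) : X →L[ℝ] X).uniformContinuous.comp <| PN.uniformContinuous.comp <|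
      hα.comp ((T ^ k : X ≃L[ℝ] X) : X →L[ℝ] X).uniformContinuous
  refine ⟨fun x => ∑' k, f k x - T.symm (∑' k, g k x),
    (uniformContinuous_tsum hfuc hgeom hf).sub
      ((T.symm : X →L[ℝ] X).uniformContinuous.comp (uniformContinuous_tsum hguc hgeom hg)),
    ⟨_, fun x => norm_sub_le_of_le (tsum_of_norm_bounded hgeom.hasSum (hf · x))
      ((T.symm : X →L[ℝ] X).le_of_opNorm_le_of_le le_rfl
        (tsum_of_norm_bounded hgeom.hasSum (hg · x)))⟩,
    fun x => sub_mem (Submodule.mem_sup_left ?_) (Submodule.mem_sup_right ?_), fun x => ?_⟩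
  · exact tsum_mem hMc fun k => hT.pow_mem_M k (hT.projM_mem _)
  · show T (T.symm _) ∈ N
    rw [T.apply_symm_apply]
    exact tsum_mem hNc fun k => hT.symm_pow_mem_N k (hT.projN_mem _)
  · beta_reduce
    rw [hF, map_sub, T.apply_symm_apply, hG x]
    conv_rhs => rw [← hT.projM_add_projN (α x)]
    abel

theorem existsUnique_isUbSolution_comp_add [CompleteSpace X]
    (hT : IsExpDichotomy T M N PM PN c t d) (hMN : Disjoint M N) (hMc : IsClosed (M : Set X))
    (hNc : IsClosed (N : Set X)) {β : X → X} {ε K : ℝ} (hβuc : UniformContinuous β)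
    (hβK : ∀ x, ‖β x‖ ≤ K) (hε : 0 ≤ ε) (hβ : ∀ x y, ‖β x - β y‖ ≤ ε * ‖x - y‖)
    (hq : c * d * (1 + t) * ε / (1 - t) < 1) :
    ∃! h : X → X, IsUbSolution T (M ⊔ N.comap ((T : X →L[ℝ] X) : X →ₗ[ℝ] X))
      (fun x => β (x + h x)) h := by
  set Y := M ⊔ N.comap ((T : X →L[ℝ] X) : X →ₗ[ℝ] X)
  set q := c * d * (1 + t) * ε / (1 - t)
  have hq0 : 0 ≤ q := by
    have := hT.c_nonneg; have := hT.d_nonneg; have := hT.t_nonneg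
    have := sub_pos.2 hT.t_lt_one
    positivity
  let S := {f : X →ᵇ X | UniformContinuous f}
  have : CompleteSpace S := isClosed_setOf_uniformContinuous.isComplete.completeSpace_coe
  have : Nonempty S := ⟨⟨0, uniformContinuous_const⟩⟩
  have hlift (ψ : X → X) (hψ : UniformContinuous ψ) (hψB : ∃ C, ∀ x, ‖ψ x‖ ≤ C) :
      ∃ f : S, ⇑(f : X →ᵇ X) = ψ :=
    ⟨⟨ofNormedAddCommGroup ψ hψ.continuous _ hψB.choose_spec, hψ⟩, rfl⟩
  have hsol (f : S) : ∃ g : S, IsUbSolution T Y (fun x => β (x + (f : X →ᵇ X) x)) g := by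
    obtain ⟨ψ, hψ⟩ :=
      hT.exists_isUbSolution hMc hNc (hβuc.comp (uniformContinuous_id.add f.2)) fun _ => hβK _
    obtain ⟨g, hg⟩ := hlift ψ hψ.1 hψ.2.1
    exact ⟨g, hg ▸ hψ⟩
  choose Φ hΦ using hsol
  have hΦ_contr : ContractingWith ⟨q, hq0⟩ Φ := by
    refine ⟨hq, LipschitzWith.of_dist_le_mul fun f g => ?_⟩
    rw [Subtype.dist_eq, BoundedContinuousFunction.dist_le (by positivity)]
    intro x
    rw [dist_eq_norm]
    exact hT.norm_sub_le_of_homological_eq_comp hMN hε hβ (hΦ f).2.2.1 (hΦ g).2.2.1 (hΦ f).2.1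
      (hΦ g).2.1 (hΦ f).2.2.2 (hΦ g).2.2.2
      (fun x => by rw [← dist_eq_norm]; exact dist_coe_le_dist x) x
  have hh₀ := hΦ (ContractingWith.fixedPoint Φ hΦ_contr)
  rw [hΦ_contr.fixedPoint_isFixedPt] at hh₀
  refine ⟨_, hh₀, fun h hh => ?_⟩
  obtain ⟨f, rfl⟩ := hlift h hh.1 hh.2.1
  have hfix : Function.IsFixedPt Φ f := by
    refine Subtype.ext (BoundedContinuousFunction.ext fun x => sub_eq_zero.mp ?_)
    have := hT.norm_sub_le_of_homological_eq_comp hMN hε hβ (hΦ f).2.2.1 hh.2.2.1 (hΦ f).2.1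
      hh.2.1 (hΦ f).2.2.2 hh.2.2.2 (fun x => (sub_self ((f : X →ᵇ X) x)).symm ▸ norm_zero.le) x
    simpa using this
  rw [hΦ_contr.fixedPoint_unique hfix]

end IsExpDichotomy

end Dichotomy

/-- Under the exponential dichotomy estimates, with
`ε = γ(1−t)/(c d (1+t))` and `β ∈ U_b(X)` Lipschitz with `‖β‖_∞ ≤ ε`,
`Lip(β) ≤ ε`, the map `Φ(φ) = Ψ⁻¹(β ∘ (I + φ))` on `U_b(X;Y)` is a contraction
with constant at most `c d (1+t) ε/(1−t) < 1` (where `Ψ(φ) = φ∘T − T∘φ`); hence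
it has a unique fixed point `h`, and `‖h‖_∞ ≤ γ`. -/
theorem contraction_fixed_point
    {X : Type*} [NormedAddCommGroup X] [NormedSpace ℝ X] [CompleteSpace X]
    (T : X ≃L[ℝ] X) (M N : Submodule ℝ X)
    (hMclosed : IsClosed (M : Set X)) (hNclosed : IsClosed (N : Set X))
    (hcompl : IsCompl M N)
    (hTM : ∀ x ∈ M, T x ∈ M) (hTN : ∀ x ∈ N, T.symm x ∈ N)
    (c t : ℝ) (hc : 1 ≤ c) (ht0 : 0 < t) (ht1 : t < 1)
    (hM : ∀ (n : ℕ), ∀ y ∈ M, ‖(T ^ n) y‖ ≤ c * t ^ n * ‖y‖)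
    (hN : ∀ (n : ℕ), ∀ z ∈ N, ‖(T.symm ^ n) z‖ ≤ c * t ^ n * ‖z‖)
    (PM PN : X →L[ℝ] X)
    (hPM : ∀ x, PM x ∈ M) (hPN : ∀ x, PN x ∈ N) (hP : ∀ x, PM x + PN x = x)
    (d : ℝ) (hd : d = max ‖PM‖ ‖PN‖)
    (Y : Submodule ℝ X)
    (hY : Y = M ⊔ N.comap ((T : X →L[ℝ] X) : X →ₗ[ℝ] X))
    (γ ε : ℝ) (hγ0 : 0 < γ) (hγ1 : γ < 1)
    (hε : ε = γ * (1 - t) / (c * d * (1 + t)))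
    (β : X → X) (hβuc : UniformContinuous β) (hβbd : ∀ x, ‖β x‖ ≤ ε)
    (hβlip : ∀ x y, ‖β x - β y‖ ≤ ε * ‖x - y‖) :
    -- the contraction constant is < 1
    c * d * (1 + t) * ε / (1 - t) < 1 ∧
    -- Φ is Lipschitz with constant c d (1+t) ε/(1−t): if ψᵢ = Φ(φᵢ), i.e.
    -- Ψ(ψᵢ) = β ∘ (I + φᵢ), and the φᵢ are uniformly C-close, then the ψᵢ are
    -- uniformly (c d (1+t) ε/(1−t))·C-close
    (∀ (φ₁ φ₂ ψ₁ ψ₂ : X → X) (C : ℝ),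
      (∀ x, φ₁ x ∈ Y) → (∀ x, φ₂ x ∈ Y) → (∀ x, ψ₁ x ∈ Y) → (∀ x, ψ₂ x ∈ Y) →
      UniformContinuous φ₁ → UniformContinuous φ₂ →
      UniformContinuous ψ₁ → UniformContinuous ψ₂ →
      (∃ C₁, ∀ x, ‖φ₁ x‖ ≤ C₁) → (∃ C₂, ∀ x, ‖φ₂ x‖ ≤ C₂) →
      (∃ C₃, ∀ x, ‖ψ₁ x‖ ≤ C₃) → (∃ C₄, ∀ x, ‖ψ₂ x‖ ≤ C₄) →
      (∀ x, ψ₁ (T x) - T (ψ₁ x) = β (x + φ₁ x)) →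
      (∀ x, ψ₂ (T x) - T (ψ₂ x) = β (x + φ₂ x)) →
      (∀ x, ‖φ₁ x - φ₂ x‖ ≤ C) →
      ∀ x, ‖ψ₁ x - ψ₂ x‖ ≤ c * d * (1 + t) * ε / (1 - t) * C) ∧
    -- hence there is a unique fixed point h in U_b(X;Y), and ‖h‖_∞ ≤ γ
    (∃ h : X → X,
      (UniformContinuous h ∧ (∃ C, ∀ x, ‖h x‖ ≤ C) ∧ (∀ x, h x ∈ Y) ∧
        ∀ x, h (T x) - T (h x) = β (x + h x)) ∧
      (∀ x, ‖h x‖ ≤ γ) ∧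
      ∀ h' : X → X,
        (UniformContinuous h' ∧ (∃ C, ∀ x, ‖h' x‖ ≤ C) ∧ (∀ x, h' x ∈ Y) ∧
          ∀ x, h' (T x) - T (h' x) = β (x + h' x)) → h' = h) := by
  subst hY
  have hMN := hcompl.disjoint
  have hT : IsExpDichotomy T M N PM PN c t d :=
    { projM_mem := hPM, projN_mem := hPN, projM_add_projN := hP, mapsTo_M := hTM,
      symm_mapsTo_N := hTN, c_nonneg := by linarith, t_nonneg := ht0.le, t_lt_one := ht1,
      norm_pow_M := hM, norm_symm_pow_N := hN, norm_projM_le := hd ▸ le_max_left _ _,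
      norm_projN_le := hd ▸ le_max_right _ _ }
  have hε0 : 0 ≤ ε := (norm_nonneg _).trans (hβbd 0)
  have hqγ : c * d * (1 + t) * ε / (1 - t) ≤ γ := by
    have h1t : 1 - t ≠ 0 := (sub_pos.2 ht1).ne'
    calc c * d * (1 + t) * ε / (1 - t) = γ * (c * d * (1 + t) / (c * d * (1 + t))) := by
          rw [hε]; field_simp
      _ ≤ γ := mul_le_of_le_one_right hγ0.le (div_self_le_one _)
  obtain ⟨h, hsol, huniq⟩ := hT.existsUnique_isUbSolution_comp_add hMN hMclosed hNclosed hβuc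
    hβbd hε0 hβlip (hqγ.trans_lt hγ1)
  refine ⟨hqγ.trans_lt hγ1, fun φ₁ φ₂ ψ₁ ψ₂ C _ _ hY₁ hY₂ _ _ _ _ _ _ hB₁ hB₂ h₁ h₂ hC =>
    hT.norm_sub_le_of_homological_eq_comp hMN hε0 hβlip hY₁ hY₂ hB₁ hB₂ h₁ h₂ hC,
    h, hsol, fun x => ?_, huniq⟩
  exact (hT.norm_le_of_homological_eq hMN hsol.2.2.1 hsol.2.1 hsol.2.2.2 (fun _ => hβbd _)
    x).trans hqγ
end

section
/- Under the hypotheses of the generalized hyperbolic splitting with ‖T|_M‖‖T⁻¹‖^θ < 1 and ‖T⁻¹|_N‖‖T‖^θ < 1, and β : X → X θ-Hölder with constant 2ε, the map h(x) = −Σ_{k=0}^∞ TᵏP_M(β(S^{-k-1}x)) + Σ_{k=1}^∞ T^{-k}P_N(β(S^{k-1}x)) (with S = T + β) is θ-Hölder: ‖h(x) − h(y)‖ ≤ C‖x−y‖^θ, where C = 2ε‖P_M‖ Σ_{k≥0} ‖T|_M‖ᵏ(‖T⁻¹‖+εs)^{(k+1)θ} + 2ε‖P_N‖ Σ_{k≥1}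 ‖T⁻¹|_N‖ᵏ(‖T‖+ε)^{(k−1)θ}, with s = ‖T⁻¹‖²/(1−‖T⁻¹‖ε), and C is finite for ε > 0 small enough. -/
/-!
The `k`-th terms of the two series in `h x - h y` are `(T|_M)ᵏ`, resp. `(T⁻¹|_N)ᵏ⁺¹`, applied
to projections of `β (S⁻ᵏ⁻¹ x) - β (S⁻ᵏ⁻¹ y)`, resp. `β (Sᵏ x) - β (Sᵏ y)`. Being bounded by `ε`
and `ε`-Lipschitz, `β` is `θ`-Hölder with constant `2ε`. Moreover `S` is `(‖T‖ + ε)`-Lipschitz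
and `S⁻¹` is `‖T⁻¹‖ / (1 - ‖T⁻¹‖ ε) = ‖T⁻¹‖ + ε s`-Lipschitz, so the `n`-th difference is at most
`2ε Lip(S^{±1})^{nθ} ‖x - y‖^θ`. The resulting series of bounds are geometric and sum to
`C ‖x - y‖^θ`.
-/

noncomputable def restrictCLM {X : Type*} [NormedAddCommGroup X] [NormedSpace ℝ X]
    (T : X →L[ℝ] X) (M : Submodule ℝ X) (h : ∀ x ∈ M, T x ∈ M) : M →L[ℝ] M where
  toLinearMap := (T : X →ₗ[ℝ] X).restrict h
  cont := by
    exact Continuous.subtype_mk (T.continuous.comp continuous_subtype_val) _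

open Real

section

variable {E F : Type*} [SeminormedAddCommGroup E] [SeminormedAddCommGroup F]

theorem norm_sub_le_two_mul_rpow_of_lipschitz {f : E → F} {ε θ : ℝ}
    (hbd : ∀ x, ‖f x‖ ≤ ε) (hlip : ∀ x y, ‖f x - f y‖ ≤ ε * ‖x - y‖)
    (hθ0 : 0 ≤ θ) (hθ1 : θ ≤ 1) (u v : E) :
    ‖f u - f v‖ ≤ 2 * ε * ‖u - v‖ ^ θ := by
  have hε : 0 ≤ ε := (norm_nonneg _).trans (hbd u)
  rcases le_total ‖u - v‖ 1 with hle | hge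
  · have : ‖u - v‖ ≤ ‖u - v‖ ^ θ := self_le_rpow_of_le_one (norm_nonneg _) hle hθ1
    nlinarith [hlip u v, rpow_nonneg (norm_nonneg (u - v)) θ]
  · have : 1 ≤ ‖u - v‖ ^ θ := one_le_rpow hge hθ0
    nlinarith [norm_sub_le (f u) (f v), hbd u, hbd v]

theorem norm_iterate_sub_le {f : E → E} {K : ℝ} (hK : 0 ≤ K)
    (hf : ∀ u v, ‖f u - f v‖ ≤ K * ‖u - v‖) (n : ℕ) (u v : E) :
    ‖f^[n] u - f^[n] v‖ ≤ K ^ n * ‖u - v‖ := by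
  have hLip : LipschitzWith K.toNNReal f :=
    .of_dist_le' (by simpa only [dist_eq_norm] using hf)
  have := (hLip.iterate n).dist_le_mul u v
  simpa only [dist_eq_norm, NNReal.coe_pow, coe_toNNReal K hK] using this

theorem norm_comp_iterate_sub_le {g : E → F} {f : E → E} {c K θ : ℝ} (hc : 0 ≤ c)
    (hK : 0 ≤ K) (hθ : 0 ≤ θ) (hg : ∀ u v, ‖g u - g v‖ ≤ c * ‖u - v‖ ^ θ)
    (hf : ∀ u v, ‖f u - f v‖ ≤ K * ‖u - v‖) (n : ℕ) (x y : E) :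
    ‖g (f^[n] x) - g (f^[n] y)‖ ≤ K ^ ((n : ℝ) * θ) * (c * ‖x - y‖ ^ θ) := by
  calc ‖g (f^[n] x) - g (f^[n] y)‖ ≤ c * ‖f^[n] x - f^[n] y‖ ^ θ := hg _ _
    _ ≤ c * (K ^ n * ‖x - y‖) ^ θ := by
      gcongr
      exact norm_iterate_sub_le hK hf n x y
    _ = K ^ ((n : ℝ) * θ) * (c * ‖x - y‖ ^ θ) := by
      rw [mul_rpow (by positivity) (norm_nonneg _), ← rpow_natCast_mul hK]
      ring

end

section

variable {X : Type*} [NormedAddCommGroup X] [NormedSpace ℝ X]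

theorem norm_add_sub_add_le (A : X →L[ℝ] X) {β : X → X} {ε : ℝ}
    (hβ : ∀ x y, ‖β x - β y‖ ≤ ε * ‖x - y‖) (u v : X) :
    ‖(A u + β u) - (A v + β v)‖ ≤ (‖A‖ + ε) * ‖u - v‖ := by
  calc ‖(A u + β u) - (A v + β v)‖ = ‖A (u - v) + (β u - β v)‖ := by
        rw [map_sub]; abel_nf
    _ ≤ ‖A‖ * ‖u - v‖ + ε * ‖u - v‖ := norm_add_le_of_le (A.le_opNorm _) (hβ u v)
    _ = (‖A‖ + ε) * ‖u - v‖ := by ring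

theorem norm_symm_sub_le_of_perturbation (A : X ≃L[ℝ] X) {β : X → X} {ε : ℝ}
    (hβ : ∀ x y, ‖β x - β y‖ ≤ ε * ‖x - y‖) (hε : ε * ‖(A.symm : X →L[ℝ] X)‖ < 1)
    (f : X ≃ X) (hf : ∀ x, f x = A x + β x) (u v : X) :
    ‖f.symm u - f.symm v‖ ≤
      ‖(A.symm : X →L[ℝ] X)‖ / (1 - ‖(A.symm : X →L[ℝ] X)‖ * ε) * ‖u - v‖ := by
  set c := ‖(A.symm : X →L[ℝ] X)‖
  set a := f.symm u
  set b := f.symm v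
  have hab : a - b = A.symm ((u - v) - (β a - β b)) := by
    have : A (a - b) = (u - v) - (β a - β b) := by
      rw [map_sub, ← f.apply_symm_apply u, ← f.apply_symm_apply v, hf, hf]
      abel
    rw [← this, A.symm_apply_apply]
  have hrec : ‖a - b‖ ≤ c * (‖u - v‖ + ε * ‖a - b‖) := by
    calc ‖a - b‖ ≤ c * ‖(u - v) - (β a - β b)‖ := by
          rw [hab]; exact (A.symm : X →L[ℝ] X).le_opNorm _
      _ ≤ c * (‖u - v‖ + ε * ‖a - b‖) := by
          gcongr
          exact norm_sub_le_of_le le_rfl (hβ a b)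
  rw [div_mul_eq_mul_div, le_div_iff₀ (by linarith)]
  linarith

variable {M : Submodule ℝ X}

theorem norm_apply_le_restrictCLM (A : X →L[ℝ] X) (hA : ∀ x ∈ M, A x ∈ M) {z : X}
    (hz : z ∈ M) : ‖A z‖ ≤ ‖restrictCLM A M hA‖ * ‖z‖ :=
  (restrictCLM A M hA).le_opNorm ⟨z, hz⟩

theorem pow_apply_mem (A : X ≃L[ℝ] X) (hA : ∀ x ∈ M, A x ∈ M) (n : ℕ) {z : X}
    (hz : z ∈ M) : (A ^ n) z ∈ M := by
  induction n with
  | zero => exact hz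
  | succ n ih => rw [pow_succ']; exact hA _ ih

theorem norm_pow_apply_le (A : X ≃L[ℝ] X) (hA : ∀ x ∈ M, A x ∈ M) (n : ℕ) {z : X}
    (hz : z ∈ M) : ‖(A ^ n) z‖ ≤ ‖restrictCLM (A : X →L[ℝ] X) M hA‖ ^ n * ‖z‖ := by
  induction n with
  | zero => simp only [pow_zero, one_mul]; exact le_rfl
  | succ n ih =>
    rw [pow_succ', pow_succ']
    calc ‖A ((A ^ n) z)‖ ≤ ‖restrictCLM (A : X →L[ℝ] X) M hA‖ * ‖(A ^ n) z‖ :=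
          norm_apply_le_restrictCLM (A : X →L[ℝ] X) hA (pow_apply_mem A hA n hz)
      _ ≤ _ := by rw [mul_assoc]; gcongr

end

section

variable {X : Type*} [NormedAddCommGroup X] [NormedSpace ℝ X] [CompleteSpace X]
  {M : Submodule ℝ X} (A : X ≃L[ℝ] X) (hA : ∀ x ∈ M, A x ∈ M)

theorem summable_pow_add_apply (hAn : ‖restrictCLM (A : X →L[ℝ] X) M hA‖ < 1) {z : ℕ → X}
    (hz : ∀ k, z k ∈ M) {B : ℝ} (hB : ∀ k, ‖z k‖ ≤ B) (j : ℕ) :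
    Summable fun k => (A ^ (k + j)) (z k) := by
  set α := ‖restrictCLM (A : X →L[ℝ] X) M hA‖
  have hα : 0 ≤ α := norm_nonneg (restrictCLM (A : X →L[ℝ] X) M hA)
  refine Summable.of_norm_bounded
    ((summable_geometric_of_lt_one hα hAn).mul_left (α ^ j * B)) fun k => ?_
  calc ‖(A ^ (k + j)) (z k)‖ ≤ α ^ (k + j) * ‖z k‖ := norm_pow_apply_le A hA _ (hz k)
    _ ≤ α ^ (k + j) * B := by gcongr; exact hB k
    _ = α ^ j * B * α ^ k := by ring

theorem norm_tsum_pow_add_sub_le (hAn : ‖restrictCLM (A : X →L[ℝ] X) M hA‖ < 1)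
    (P : X →L[ℝ] X) (hP : ∀ x, P x ∈ M) {z w : ℕ → X} {B : ℝ}
    (hzB : ∀ k, ‖z k‖ ≤ B) (hwB : ∀ k, ‖w k‖ ≤ B) {ρ : ℕ → ℝ} {c : ℝ} (j : ℕ)
    (hρ : Summable fun k => ‖restrictCLM (A : X →L[ℝ] X) M hA‖ ^ (k + j) * ρ k)
    (hzw : ∀ k, ‖z k - w k‖ ≤ ρ k * c) :
    ‖∑' k, (A ^ (k + j)) (P (z k)) - ∑' k, (A ^ (k + j)) (P (w k))‖ ≤
      ‖P‖ * (∑' k, ‖restrictCLM (A : X →L[ℝ] X) M hA‖ ^ (k + j) * ρ k) * c := by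
  set α := ‖restrictCLM (A : X →L[ℝ] X) M hA‖
  have hPB {u : ℕ → X} (hu : ∀ k, ‖u k‖ ≤ B) (k : ℕ) : ‖P (u k)‖ ≤ ‖P‖ * B :=
    P.le_of_opNorm_le_of_le le_rfl (hu k)
  rw [← (summable_pow_add_apply A hA hAn (fun k => hP (z k)) (hPB hzB) j).tsum_sub
    (summable_pow_add_apply A hA hAn (fun k => hP (w k)) (hPB hwB) j)]
  refine tsum_of_norm_bounded ((hρ.hasSum.mul_left ‖P‖).mul_right c) fun k => ?_
  calc ‖(A ^ (k + j)) (P (z k)) - (A ^ (k + j)) (P (w k))‖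
        = ‖(A ^ (k + j)) (P (z k - w k))‖ := by rw [map_sub, map_sub]
    _ ≤ α ^ (k + j) * ‖P (z k - w k)‖ := norm_pow_apply_le A hA _ (hP _)
    _ ≤ α ^ (k + j) * (‖P‖ * (ρ k * c)) := by
      gcongr; exact P.le_of_opNorm_le_of_le le_rfl (hzw k)
    _ = ‖P‖ * (α ^ (k + j) * ρ k) * c := by ring

end

theorem summable_pow_mul_rpow_succ_mul {a b θ : ℝ} (ha : 0 ≤ a) (hb : 0 ≤ b)
    (h : a * b ^ θ < 1) : Summable fun k : ℕ => a ^ k * b ^ (((k : ℝ) + 1) * θ) := by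
  refine ((summable_geometric_of_lt_one (by positivity) h).mul_left (b ^ θ)).congr fun k => ?_
  rw [mul_comm _ θ, ← Nat.cast_succ, rpow_mul_natCast hb, pow_succ, mul_pow]
  ring

theorem summable_pow_succ_mul_rpow_mul {a b θ : ℝ} (ha : 0 ≤ a) (hb : 0 ≤ b)
    (h : a * b ^ θ < 1) : Summable fun k : ℕ => a ^ (k + 1) * b ^ ((k : ℝ) * θ) := by
  refine ((summable_geometric_of_lt_one (by positivity) h).mul_left a).congr fun k => ?_
  rw [mul_comm _ θ, rpow_mul_natCast hb, pow_succ, mul_pow]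
  ring

theorem conjugacy_is_holder_general
    {X : Type*} [NormedAddCommGroup X] [NormedSpace ℝ X] [CompleteSpace X]
    (T : X ≃L[ℝ] X) (M N : Submodule ℝ X)
    (hTM : ∀ x ∈ M, T x ∈ M) (hTN : ∀ x ∈ N, T.symm x ∈ N)
    (PM PN : X →L[ℝ] X)
    (hPM : ∀ x, PM x ∈ M) (hPN : ∀ x, PN x ∈ N)
    (hTMn : ‖restrictCLM (T : X →L[ℝ] X) M hTM‖ < 1)
    (hTNn : ‖restrictCLM (T.symm : X →L[ℝ] X) N hTN‖ < 1)
    (θ : ℝ) (hθ0 : 0 < θ) (hθ1 : θ ≤ 1)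
    (ε : ℝ) (hε0 : 0 < ε) (hεinv : ε * ‖(T.symm : X →L[ℝ] X)‖ < 1)
    (β : X → X)
    (hβbd : ∀ x, ‖β x‖ ≤ ε) (hβlip : ∀ x y, ‖β x - β y‖ ≤ ε * ‖x - y‖)
    (s : ℝ) (hs : s = ‖(T.symm : X →L[ℝ] X)‖ ^ 2 / (1 - ‖(T.symm : X →L[ℝ] X)‖ * ε))
    -- "ε small enough":
    (hsm₁ : ‖restrictCLM (T : X →L[ℝ] X) M hTM‖ * (‖(T.symm : X →L[ℝ] X)‖ + ε * s) ^ θ < 1)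
    (hsm₂ : ‖restrictCLM (T.symm : X →L[ℝ] X) N hTN‖ * (‖(T : X →L[ℝ] X)‖ + ε) ^ θ < 1)
    -- S = T + β, as a bijection of X
    (e : X ≃ X) (he : ∀ x, e x = T x + β x)
    (h : X → X)
    (hh : ∀ x, h x = - (∑' k : ℕ, (T ^ k) (PM (β ((⇑e.symm)^[k + 1] x))))
                     + ∑' k : ℕ, (T.symm ^ (k + 1)) (PN (β ((⇑e)^[k] x))))
    (C : ℝ)
    (hC : C = 2 * ε * ‖PM‖ *
            (∑' k : ℕ, ‖restrictCLM (T : X →L[ℝ] X) M hTM‖ ^ k *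
              (‖(T.symm : X →L[ℝ] X)‖ + ε * s) ^ (((k : ℝ) + 1) * θ))
          + 2 * ε * ‖PN‖ *
            (∑' k : ℕ, ‖restrictCLM (T.symm : X →L[ℝ] X) N hTN‖ ^ (k + 1) *
              (‖(T : X →L[ℝ] X)‖ + ε) ^ ((k : ℝ) * θ))) :
    (Summable fun k : ℕ => ‖restrictCLM (T : X →L[ℝ] X) M hTM‖ ^ k *
      (‖(T.symm : X →L[ℝ] X)‖ + ε * s) ^ (((k : ℝ) + 1) * θ)) ∧
    (Summable fun k : ℕ => ‖restrictCLM (T.symm : X →L[ℝ] X) N hTN‖ ^ (k + 1) *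
      (‖(T : X →L[ℝ] X)‖ + ε) ^ ((k : ℝ) * θ)) ∧
    ∀ x y, ‖h x - h y‖ ≤ C * ‖x - y‖ ^ θ := by
  set c := ‖(T.symm : X →L[ℝ] X)‖
  have hL : c + ε * s = c / (1 - c * ε) := by
    have : 1 - c * ε ≠ 0 := by linarith
    rw [hs]; field_simp; ring
  have hL0 : 0 ≤ c + ε * s := by rw [hL]; exact div_nonneg (norm_nonneg _) (by linarith)
  have hD0 : 0 ≤ ‖(T : X →L[ℝ] X)‖ + ε := by positivity
  have hsum₁ := summable_pow_mul_rpow_succ_mul (by positivity) hL0 hsm₁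
  have hsum₂ := summable_pow_succ_mul_rpow_mul (by positivity) hD0 hsm₂
  refine ⟨hsum₁, hsum₂, fun x y => ?_⟩
  have hβ := norm_sub_le_two_mul_rpow_of_lipschitz hβbd hβlip hθ0.le hθ1
  have hS (u v : X) : ‖e u - e v‖ ≤ (‖(T : X →L[ℝ] X)‖ + ε) * ‖u - v‖ := by
    simpa only [he, ContinuousLinearEquiv.coe_coe] using
      norm_add_sub_add_le (T : X →L[ℝ] X) hβlip u v
  have hSinv (u v : X) : ‖e.symm u - e.symm v‖ ≤ (c + ε * s) * ‖u - v‖ :=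
    hL ▸ norm_symm_sub_le_of_perturbation T hβlip hεinv e he u v
  have h2ε : 0 ≤ 2 * ε := by positivity
  have hM := norm_tsum_pow_add_sub_le T hTM hTMn PM hPM (fun _ => hβbd _) (fun _ => hβbd _) 0
    hsum₁ fun k => by
      simpa only [Nat.cast_succ] using
        norm_comp_iterate_sub_le h2ε hL0 hθ0.le hβ hSinv (k + 1) x y
  have hN := norm_tsum_pow_add_sub_le T.symm hTN hTNn PN hPN (fun _ => hβbd _)
    (fun _ => hβbd _) 1 hsum₂ fun k => norm_comp_iterate_sub_le h2ε hD0 hθ0.le hβ hS k x y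
  simp only [add_zero] at hM
  rw [hh x, hh y, hC]
  calc _ = ‖(∑' k, (T.symm ^ (k + 1)) (PN (β ((⇑e)^[k] x)))
          - ∑' k, (T.symm ^ (k + 1)) (PN (β ((⇑e)^[k] y))))
        - (∑' k, (T ^ k) (PM (β ((⇑e.symm)^[k + 1] x)))
          - ∑' k, (T ^ k) (PM (β ((⇑e.symm)^[k + 1] y))))‖ := by congr 1; abel
    _ ≤ _ := (norm_sub_le _ _).trans (add_le_add hN hM)
    _ = _ := by ring

/-- Under the generalized hyperbolic splitting with
`‖T|_M‖‖T⁻¹‖^θ < 1`, `‖T⁻¹|_N‖‖T‖^θ < 1` (and `ε` small enough, encoded by the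
hypotheses `hsm₁`, `hsm₂`), and `β` θ-Hölder with constant `2ε`, the map
`h(x) = −Σ_{k≥0} Tᵏ P_M(β(S^{−k−1}x)) + Σ_{k≥1} T^{−k} P_N(β(S^{k−1}x))`
(with `S = T + β`) is θ-Hölder: `‖h(x) − h(y)‖ ≤ C ‖x−y‖^θ`, where `C` is the
explicit finite constant of the paper. -/
theorem conjugacy_is_holder
    {X : Type*} [NormedAddCommGroup X] [NormedSpace ℝ X] [CompleteSpace X]
    (T : X ≃L[ℝ] X) (M N : Submodule ℝ X)
    (hMclosed : IsClosed (M : Set X)) (hNclosed : IsClosed (N : Set X))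
    (hcompl : IsCompl M N)
    (hTM : ∀ x ∈ M, T x ∈ M) (hTN : ∀ x ∈ N, T.symm x ∈ N)
    (PM PN : X →L[ℝ] X)
    (hPM : ∀ x, PM x ∈ M) (hPN : ∀ x, PN x ∈ N) (hP : ∀ x, PM x + PN x = x)
    (hTMn : ‖restrictCLM (T : X →L[ℝ] X) M hTM‖ < 1)
    (hTNn : ‖restrictCLM (T.symm : X →L[ℝ] X) N hTN‖ < 1)
    (θ : ℝ) (hθ0 : 0 < θ) (hθ1 : θ ≤ 1)
    (hθM : ‖restrictCLM (T : X →L[ℝ] X) M hTM‖ * ‖(T.symm : X →L[ℝ] X)‖ ^ θ < 1)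
    (hθN : ‖restrictCLM (T.symm : X →L[ℝ] X) N hTN‖ * ‖(T : X →L[ℝ] X)‖ ^ θ < 1)
    (ε : ℝ) (hε0 : 0 < ε) (hεinv : ε * ‖(T.symm : X →L[ℝ] X)‖ < 1)
    (β : X → X) (hβuc : UniformContinuous β)
    (hβbd : ∀ x, ‖β x‖ ≤ ε) (hβlip : ∀ x y, ‖β x - β y‖ ≤ ε * ‖x - y‖)
    (s : ℝ) (hs : s = ‖(T.symm : X →L[ℝ] X)‖ ^ 2 / (1 - ‖(T.symm : X →L[ℝ] X)‖ * ε))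
    -- "ε small enough":
    (hsm₁ : ‖restrictCLM (T : X →L[ℝ] X) M hTM‖ * (‖(T.symm : X →L[ℝ] X)‖ + ε * s) ^ θ < 1)
    (hsm₂ : ‖restrictCLM (T.symm : X →L[ℝ] X) N hTN‖ * (‖(T : X →L[ℝ] X)‖ + ε) ^ θ < 1)
    -- S = T + β, as a bijection of X
    (e : X ≃ X) (he : ∀ x, e x = T x + β x)
    (h : X → X)
    (hh : ∀ x, h x = - (∑' k : ℕ, (T ^ k) (PM (β ((⇑e.symm)^[k + 1] x))))
                     + ∑' k : ℕ, (T.symm ^ (k + 1)) (PN (β ((⇑e)^[k] x))))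
    (C : ℝ)
    (hC : C = 2 * ε * ‖PM‖ *
            (∑' k : ℕ, ‖restrictCLM (T : X →L[ℝ] X) M hTM‖ ^ k *
              (‖(T.symm : X →L[ℝ] X)‖ + ε * s) ^ (((k : ℝ) + 1) * θ))
          + 2 * ε * ‖PN‖ *
            (∑' k : ℕ, ‖restrictCLM (T.symm : X →L[ℝ] X) N hTN‖ ^ (k + 1) *
              (‖(T : X →L[ℝ] X)‖ + ε) ^ ((k : ℝ) * θ))) :
    (Summable fun k : ℕ => ‖restrictCLM (T : X →L[ℝ] X) M hTM‖ ^ k *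
      (‖(T.symm : X →L[ℝ] X)‖ + ε * s) ^ (((k : ℝ) + 1) * θ)) ∧
    (Summable fun k : ℕ => ‖restrictCLM (T.symm : X →L[ℝ] X) N hTN‖ ^ (k + 1) *
      (‖(T : X →L[ℝ] X)‖ + ε) ^ ((k : ℝ) * θ)) ∧
    ∀ x y, ‖h x - h y‖ ≤ C * ‖x - y‖ ^ θ :=
  conjugacy_is_holder_general T M N hTM hTN PM PN hPM hPN hTMn hTNn θ hθ0 hθ1 ε hε0 hεinv β hβbd
    hβlip s hs hsm₁ hsm₂ e he h hh C hC
end
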